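/- arXiv:1908.04821 — 4 statements merged into one kernel-verified Lean document; each statement's English description precedes it below -/
import Mathlib

section
/- Let U ⊆ ℝ² be open and connected, and let E, F, G, e, f, g, Λ, I_Ω, II_Ω be as in the hypotheses of the fundamental theorem (decompositions (E F; F G) = Λ·I_Ω·Λᵀ, (e f; f g) = Λ·II_Ω with E_Ω > 0, G_Ω > 0, E_Ω·G_Ω − F_Ω² > 0, λ_Ω := det Λ with zero set of empty interior, the two ideal-membership conditions, and the Gauss and Mainardi–Codazzi equations on U ∖ λ_Ω⁻¹(0)). If x, x̄ : U → ℝ³ are frontals with tangent moving bases Ω, Ω̄ respectively, both satisfying Dx = Ω·Λᵀ, ΩᵀΩ = I_Ω, −Ωᵀ·Dn = II_Ω (and the same equations for x̄, Ω̄ with the same Λ, I_Ω, II_Ω), then there exist a proper orthogonal linear transformation ρ ∈ SO(3) and a vector a ∈ ℝ³ such that Ω̄ = ρ·Ω and x̄ = ρ∘x + a. -/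
open Matrix Filter

noncomputable section

abbrev Pt : Type := ℝ × ℝ
abbrev Vec3 : Type := Fin 3 → ℝ

/-- direction vector for the `j`-th partial derivative -/
def pdir (j : Fin 2) : Pt := if j = 0 then ((1 : ℝ), (0 : ℝ)) else ((0 : ℝ), (1 : ℝ))

/-- partial derivative in coordinate direction `j` -/
def pd {E : Type*} [NormedAddCommGroup E] [NormedSpace ℝ E]
    (j : Fin 2) (f : Pt → E) (p : Pt) : E :=
  fderiv ℝ f p (pdir j)

/-- Jacobian matrix of a map into `Fin n → ℝ` -/
def Jac {n : ℕ} (f : Pt → (Fin n → ℝ)) (p : Pt) : Matrix (Fin n) (Fin 2) ℝ :=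
  Matrix.of fun i j => pd j (fun q => f q i) p

/-- entrywise partial derivative of a matrix valued map -/
def pdM {m n : ℕ} (j : Fin 2) (A : Pt → Matrix (Fin m) (Fin n) ℝ) (p : Pt) :
    Matrix (Fin m) (Fin n) ℝ :=
  Matrix.of fun i k => pd j (fun q => A q i k) p

/-- entrywise smoothness of a matrix valued map on a set -/
def SmoothMatOn {m n : ℕ} (U : Set Pt) (A : Pt → Matrix (Fin m) (Fin n) ℝ) : Prop :=
  ∀ i k, ContDiffOn ℝ (⊤ : ℕ∞) (fun p => A p i k) U

/-- `x` is a frontal on `U` -/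
def IsFrontalOn (U : Set Pt) (x : Pt → Vec3) : Prop :=
  ContDiffOn ℝ (⊤ : ℕ∞) x U ∧
  ∀ p ∈ U, ∃ V : Set Pt, V ⊆ U ∧ IsOpen V ∧ p ∈ V ∧
    ∃ ν : Pt → Vec3, ContDiffOn ℝ (⊤ : ℕ∞) ν V ∧
      ∀ q ∈ V, ν q ⬝ᵥ ν q = 1 ∧ ∀ j : Fin 2, ν q ⬝ᵥ (Jac x q)ᵀ j = 0

/-- `x` is a (wave) front on `U` -/
def IsFrontOn (U : Set Pt) (x : Pt → Vec3) : Prop :=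
  ContDiffOn ℝ (⊤ : ℕ∞) x U ∧
  ∀ p ∈ U, ∃ V : Set Pt, V ⊆ U ∧ IsOpen V ∧ p ∈ V ∧
    ∃ ν : Pt → Vec3, ContDiffOn ℝ (⊤ : ℕ∞) ν V ∧
      ∀ q ∈ V, ν q ⬝ᵥ ν q = 1 ∧ (∀ j : Fin 2, ν q ⬝ᵥ (Jac x q)ᵀ j = 0) ∧
        (Matrix.fromRows (Jac x q) (Jac ν q)).rank = 2

/-- `Ω` is a tangent moving base of `x` on `U` -/
def IsTMBOn (U : Set Pt) (x : Pt → Vec3) (Ω : Pt → Matrix (Fin 3) (Fin 2) ℝ) : Prop :=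
  SmoothMatOn U Ω ∧
  ∀ p ∈ U, LinearIndependent ℝ (fun j : Fin 2 => (Ω p)ᵀ j) ∧
    ∀ j : Fin 2, (Jac x p)ᵀ j ∈ Submodule.span ℝ (Set.range fun k : Fin 2 => (Ω p)ᵀ k)

/-- unit normal induced by a moving base -/
def nor (Ω : Pt → Matrix (Fin 3) (Fin 2) ℝ) (p : Pt) : Vec3 :=
  (Real.sqrt ((crossProduct ((Ω p)ᵀ 0) ((Ω p)ᵀ 1)) ⬝ᵥ (crossProduct ((Ω p)ᵀ 0) ((Ω p)ᵀ 1))))⁻¹ •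
    crossProduct ((Ω p)ᵀ 0) ((Ω p)ᵀ 1)

def IOm (Ω : Pt → Matrix (Fin 3) (Fin 2) ℝ) (p : Pt) : Matrix (Fin 2) (Fin 2) ℝ :=
  (Ω p)ᵀ * Ω p

def IIOm (Ω : Pt → Matrix (Fin 3) (Fin 2) ℝ) (p : Pt) : Matrix (Fin 2) (Fin 2) ℝ :=
  -((Ω p)ᵀ * Jac (nor Ω) p)

def Lam (x : Pt → Vec3) (Ω : Pt → Matrix (Fin 3) (Fin 2) ℝ) (p : Pt) :
    Matrix (Fin 2) (Fin 2) ℝ :=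
  (Jac x p)ᵀ * Ω p * (IOm Ω p)⁻¹

def lamOm (x : Pt → Vec3) (Ω : Pt → Matrix (Fin 3) (Fin 2) ℝ) (p : Pt) : ℝ :=
  (Lam x Ω p).det

def muM (Ω : Pt → Matrix (Fin 3) (Fin 2) ℝ) (p : Pt) : Matrix (Fin 2) (Fin 2) ℝ :=
  -((IIOm Ω p)ᵀ * (IOm Ω p)⁻¹)

/-- the Ω-relative curvature -/
def KOm (Ω : Pt → Matrix (Fin 3) (Fin 2) ℝ) (p : Pt) : ℝ := (muM Ω p).det

/-- the Ω-relative mean curvature -/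
def HOm (x : Pt → Vec3) (Ω : Pt → Matrix (Fin 3) (Fin 2) ℝ) (p : Pt) : ℝ :=
  -(1 / 2) * (muM Ω p * (Lam x Ω p).adjugate).trace

/-- singular set of `x` in `U` -/
def Sing (U : Set Pt) (x : Pt → Vec3) : Set Pt :=
  {p ∈ U | (Jac x p).rank < 2}

/-- first Christoffel matrix built from `E, F, G` -/
def Gam1 (E F G : Pt → ℝ) (p : Pt) : Matrix (Fin 2) (Fin 2) ℝ :=
  !![(1 / 2) * pd 0 E p, pd 0 F p - (1 / 2) * pd 1 E p;
     (1 / 2) * pd 1 E p, (1 / 2) * pd 0 G p] * (!![E p, F p; F p, G p])⁻¹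

/-- second Christoffel matrix built from `E, F, G` -/
def Gam2 (E F G : Pt → ℝ) (p : Pt) : Matrix (Fin 2) (Fin 2) ℝ :=
  !![(1 / 2) * pd 1 E p, (1 / 2) * pd 0 G p;
     pd 1 F p - (1 / 2) * pd 0 G p, (1 / 2) * pd 1 G p] * (!![E p, F p; F p, G p])⁻¹

/-- the unit normal `(-g₁, -g₂, 1)/√(1+g₁²+g₂²)` -/
def gnormal (g₁ g₂ : Pt → ℝ) (q : Pt) : Vec3 :=
  (Real.sqrt (1 + g₁ q ^ 2 + g₂ q ^ 2))⁻¹ • ![-(g₁ q), -(g₂ q), 1]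

/-- Weingarten matrix `α = -IIᵀ I⁻¹` of a frontal -/
def alphaM (x : Pt → Vec3) (Ω : Pt → Matrix (Fin 3) (Fin 2) ℝ) (p : Pt) :
    Matrix (Fin 2) (Fin 2) ℝ :=
  -((-((Jac x p)ᵀ * Jac (nor Ω) p))ᵀ * ((Jac x p)ᵀ * Jac x p)⁻¹)

/-- Gaussian curvature -/
def Kgauss (x : Pt → Vec3) (Ω : Pt → Matrix (Fin 3) (Fin 2) ℝ) (p : Pt) : ℝ :=
  (alphaM x Ω p).det

/-- mean curvature -/
def Hmean (x : Pt → Vec3) (Ω : Pt → Matrix (Fin 3) (Fin 2) ℝ) (p : Pt) : ℝ :=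
  -(1 / 2) * (alphaM x Ω p).trace

namespace FTF
variable {p : Pt} {j : Fin 2}

lemma pd_congr_nhds {f g : Pt → ℝ} (h : f =ᶠ[nhds p] g) : pd j f p = pd j g p := by
  unfold pd; rw [h.fderiv_eq]

lemma pd_const (c : ℝ) : pd j (fun _ => c) p = 0 := by
  unfold pd; simp

lemma pd_mul {a b : Pt → ℝ} (ha : DifferentiableAt ℝ a p) (hb : DifferentiableAt ℝ b p) :
    pd j (fun q => a q * b q) p = pd j a p * b p + a p * pd j b p := by
  unfold pd; rw [fderiv_fun_mul ha hb]
  simp only [ContinuousLinearMap.add_apply, ContinuousLinearMap.smul_apply, smul_eq_mul]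
  ring

lemma pd_sum {ι : Type*} (s : Finset ι) {f : ι → Pt → ℝ}
    (h : ∀ i ∈ s, DifferentiableAt ℝ (f i) p) :
    pd j (fun q => ∑ i ∈ s, f i q) p = ∑ i ∈ s, pd j (f i) p := by
  unfold pd; rw [fderiv_fun_sum h]; simp

lemma pd_dot {n : ℕ} {a b : Pt → Fin n → ℝ}
    (ha : ∀ i, DifferentiableAt ℝ (fun q => a q i) p)
    (hb : ∀ i, DifferentiableAt ℝ (fun q => b q i) p) :
    pd j (fun q => a q ⬝ᵥ b q) p
      = ∑ i, (pd j (fun q => a q i) p * b p i + a p i * pd j (fun q => b q i) p) := by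
  have h1 : (fun q => a q ⬝ᵥ b q) = fun q => ∑ i, a q i * b q i := by
    funext q; simp [dotProduct]
  rw [h1, pd_sum _ (fun i _ => (ha i).fun_mul (hb i))]
  exact Finset.sum_congr rfl fun i _ => pd_mul (ha i) (hb i)

lemma fderiv_zero_of_pd {f : Pt → ℝ} (h0 : pd 0 f p = 0) (h1 : pd 1 f p = 0) :
    fderiv ℝ f p = 0 := by
  unfold pd at h0 h1
  ext <;> simp [pdir] at h0 h1 ⊢ <;> assumption

end FTF
namespace FTF
variable {p q : Pt} {j : Fin 2}

def cc (Ω : Pt → Matrix (Fin 3) (Fin 2) ℝ) (q : Pt) : Vec3 :=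
  crossProduct ((Ω q)ᵀ 0) ((Ω q)ᵀ 1)

def Sfn (Ω : Pt → Matrix (Fin 3) (Fin 2) ℝ) (q : Pt) : ℝ := cc Ω q ⬝ᵥ cc Ω q

def Bm (Ω : Pt → Matrix (Fin 3) (Fin 2) ℝ) (q : Pt) : Matrix (Fin 3) (Fin 3) ℝ :=
  Matrix.of fun i k => ![Ω q i 0, Ω q i 1, nor Ω q i] k

variable {Ω : Pt → Matrix (Fin 3) (Fin 2) ℝ}

lemma cc_apply (i : Fin 3) : cc Ω q i =
    ![Ω q 1 0 * Ω q 2 1 - Ω q 2 0 * Ω q 1 1,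
      Ω q 2 0 * Ω q 0 1 - Ω q 0 0 * Ω q 2 1,
      Ω q 0 0 * Ω q 1 1 - Ω q 1 0 * Ω q 0 1] i := by
  fin_cases i <;> simp [cc, crossProduct]

lemma lagrange : Sfn Ω q = (IOm Ω q).det := by
  simp [Sfn, cc_apply, dotProduct, IOm, Matrix.det_fin_two, Matrix.mul_apply,
    Fin.sum_univ_three, Fin.sum_univ_succ]
  ring

lemma nor_apply (i : Fin 3) : nor Ω q i = (Real.sqrt (Sfn Ω q))⁻¹ * cc Ω q i := rfl

lemma cc_dot_col (k : Fin 2) : (∑ i, cc Ω q i * Ω q i k) = 0 := by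
  fin_cases k <;> simp [cc_apply, Fin.sum_univ_three] <;> ring

lemma nor_dot_col (k : Fin 2) : (∑ i, nor Ω q i * Ω q i k) = 0 := by
  simp only [nor_apply, mul_assoc, ← Finset.mul_sum, cc_dot_col, mul_zero]

lemma nor_dot_self (h : 0 < Sfn Ω q) : (∑ i, nor Ω q i * nor Ω q i) = 1 := by
  simp only [nor_apply]
  have h2 : (∑ i, (Real.sqrt (Sfn Ω q))⁻¹ * cc Ω q i * ((Real.sqrt (Sfn Ω q))⁻¹ * cc Ω q i))
      = (Real.sqrt (Sfn Ω q))⁻¹ ^ 2 * Sfn Ω q := by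
    simp [Sfn, dotProduct, Fin.sum_univ_three]; ring
  rw [h2, inv_pow, Real.sq_sqrt h.le]
  exact inv_mul_cancel₀ h.ne'

@[simp] lemma Bm_apply0 (i : Fin 3) : Bm Ω q i 0 = Ω q i 0 := rfl
@[simp] lemma Bm_apply1 (i : Fin 3) : Bm Ω q i 1 = Ω q i 1 := rfl
@[simp] lemma Bm_apply2 (i : Fin 3) : Bm Ω q i 2 = nor Ω q i := rfl

lemma Bm_det (h : 0 < Sfn Ω q) : (Bm Ω q).det = Real.sqrt (Sfn Ω q) := by
  have h1 : (Bm Ω q).det = (Real.sqrt (Sfn Ω q))⁻¹ * Sfn Ω q := by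
    simp [Matrix.det_fin_three, nor_apply, cc_apply, Sfn, dotProduct, Fin.sum_univ_three]
    ring
  rw [h1]
  have hs := Real.sqrt_ne_zero'.mpr h
  rw [inv_mul_eq_iff_eq_mul₀ hs, Real.mul_self_sqrt h.le]

end FTF
namespace FTF
section SM
variable {U : Set Pt} {p : Pt} {j : Fin 2} {Ω : Pt → Matrix (Fin 3) (Fin 2) ℝ}

lemma entry_contDiffAt (hU : IsOpen U) (hs : SmoothMatOn U Ω) (hp : p ∈ U) (i : Fin 3)
    (k : Fin 2) : ContDiffAt ℝ (⊤ : ℕ∞) (fun q => Ω q i k) p :=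
  (hs i k).contDiffAt (hU.mem_nhds hp)

lemma cc_contDiffAt (hU : IsOpen U) (hs : SmoothMatOn U Ω) (hp : p ∈ U) (i : Fin 3) :
    ContDiffAt ℝ (⊤ : ℕ∞) (fun q => cc Ω q i) p := by
  have h := entry_contDiffAt hU hs hp
  have h1 : (fun q => cc Ω q i) = fun q =>
      ![Ω q 1 0 * Ω q 2 1 - Ω q 2 0 * Ω q 1 1,
        Ω q 2 0 * Ω q 0 1 - Ω q 0 0 * Ω q 2 1,
        Ω q 0 0 * Ω q 1 1 - Ω q 1 0 * Ω q 0 1] i := funext fun q => cc_apply i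
  rw [h1]
  fin_cases i <;> simp only [Matrix.cons_val_zero, Matrix.cons_val_one, Matrix.head_cons,
    Matrix.cons_val_two, Matrix.tail_cons, Fin.mk_one, Fin.mk_zero]
  · exact ((h 1 0).mul (h 2 1)).sub ((h 2 0).mul (h 1 1))
  · exact ((h 2 0).mul (h 0 1)).sub ((h 0 0).mul (h 2 1))
  · exact ((h 0 0).mul (h 1 1)).sub ((h 1 0).mul (h 0 1))

lemma Sfn_contDiffAt (hU : IsOpen U) (hs : SmoothMatOn U Ω) (hp : p ∈ U) :
    ContDiffAt ℝ (⊤ : ℕ∞) (Sfn Ω) p := by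
  have h1 : Sfn Ω = fun q => ∑ i, cc Ω q i * cc Ω q i := by
    funext q; simp [Sfn, dotProduct]
  rw [h1]
  exact ContDiffAt.sum fun i _ => (cc_contDiffAt hU hs hp i).mul (cc_contDiffAt hU hs hp i)

lemma nor_contDiffAt (hU : IsOpen U) (hs : SmoothMatOn U Ω) (hp : p ∈ U)
    (hpos : 0 < Sfn Ω p) (i : Fin 3) : ContDiffAt ℝ (⊤ : ℕ∞) (fun q => nor Ω q i) p := by
  have h1 : (fun q => nor Ω q i) = fun q => (Real.sqrt (Sfn Ω q))⁻¹ * cc Ω q i :=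
    funext fun q => nor_apply i
  rw [h1]
  have hsq : ContDiffAt ℝ (⊤ : ℕ∞) (fun q => Real.sqrt (Sfn Ω q)) p :=
    (Real.contDiffAt_sqrt hpos.ne').comp p (Sfn_contDiffAt hU hs hp)
  exact (hsq.inv (Real.sqrt_ne_zero'.mpr hpos)).mul (cc_contDiffAt hU hs hp i)

lemma Bm_contDiffAt (hU : IsOpen U) (hs : SmoothMatOn U Ω) (hp : p ∈ U)
    (hpos : 0 < Sfn Ω p) (i : Fin 3) (k : Fin 3) :
    ContDiffAt ℝ (⊤ : ℕ∞) (fun q => Bm Ω q i k) p := by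
  fin_cases k
  · exact entry_contDiffAt hU hs hp i 0
  · exact entry_contDiffAt hU hs hp i 1
  · exact nor_contDiffAt hU hs hp hpos i

lemma contDiffAt_mul_entry {l m n : ℕ} {A : Pt → Matrix (Fin l) (Fin m) ℝ}
    {C : Pt → Matrix (Fin m) (Fin n) ℝ}
    (hA : ∀ i k, ContDiffAt ℝ (⊤ : ℕ∞) (fun q => A q i k) p)
    (hC : ∀ i k, ContDiffAt ℝ (⊤ : ℕ∞) (fun q => C q i k) p) (i : Fin l) (k : Fin n) :
    ContDiffAt ℝ (⊤ : ℕ∞) (fun q => (A q * C q) i k) p := by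
  have h1 : (fun q => (A q * C q) i k) = fun q => ∑ r, A q i r * C q r k := by
    funext q; simp [Matrix.mul_apply]
  rw [h1]
  exact ContDiffAt.sum fun r _ => (hA i r).mul (hC r k)

lemma pdM_mul {l m n : ℕ} {A : Pt → Matrix (Fin l) (Fin m) ℝ}
    {C : Pt → Matrix (Fin m) (Fin n) ℝ}
    (hA : ∀ i k, DifferentiableAt ℝ (fun q => A q i k) p)
    (hC : ∀ i k, DifferentiableAt ℝ (fun q => C q i k) p) :
    pdM j (fun q => A q * C q) p = pdM j A p * C p + A p * pdM j C p := by
  ext i k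
  show pd j (fun q => (A q * C q) i k) p = _
  have h1 : (fun q => (A q * C q) i k) = fun q => ∑ r, A q i r * C q r k := by
    funext q; simp [Matrix.mul_apply]
  rw [h1, pd_sum _ (fun r _ => (hA i r).fun_mul (hC r k))]
  simp only [Matrix.add_apply, Matrix.mul_apply, pdM, Matrix.of_apply]
  rw [← Finset.sum_add_distrib]
  exact Finset.sum_congr rfl fun r _ => pd_mul (hA i r) (hC r k)

end SM
end FTF
namespace FTF

lemma pd_symm {f : Pt → ℝ} {p : Pt} (hf : ContDiffAt ℝ (⊤ : ℕ∞) f p) :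
    pd 0 (fun q => pd 1 f q) p = pd 1 (fun q => pd 0 f q) p := by
  have hsym := hf.isSymmSndFDerivAt ((by rw [minSmoothness_of_isRCLikeNormedField]; rw [show (2 : WithTop ℕ∞) = ((2 : ℕ∞) : WithTop ℕ∞) by norm_cast]; exact WithTop.coe_le_coe.mpr le_top))
  have hd : DifferentiableAt ℝ (fderiv ℝ f) p :=
    (hf.fderiv_right (m := 1) (WithTop.coe_le_coe.mpr le_top)).differentiableAt one_ne_zero
  have h2 : ∀ w : Pt, ∀ j : Fin 2, fderiv ℝ (fun q => fderiv ℝ f q w) p (pdir j)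
      = fderiv ℝ (fderiv ℝ f) p (pdir j) w := by
    intro w j
    rw [fderiv_clm_apply hd (differentiableAt_const w)]
    simp
  show fderiv ℝ (fun q => fderiv ℝ f q (pdir 1)) p (pdir 0) = _
  rw [h2, hsym (pdir 0) (pdir 1)]
  exact (h2 (pdir 0) 1).symm

/-- the common Gram matrix of the adapted frame -/
def gram (M : Matrix (Fin 2) (Fin 2) ℝ) : Matrix (Fin 3) (Fin 3) ℝ :=
  Matrix.of fun a b => ![![M 0 0, M 0 1, 0], ![M 1 0, M 1 1, 0], ![0, 0, 1]] a b

structure Good (U : Set Pt) (IOmg IIOmg Λg : Pt → Matrix (Fin 2) (Fin 2) ℝ)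
    (x : Pt → Vec3) (Ω : Pt → Matrix (Fin 3) (Fin 2) ℝ) : Prop where
  hU : IsOpen U
  hsm : SmoothMatOn U Ω
  hΛsm : SmoothMatOn U Λg
  hx : ContDiffOn ℝ (⊤ : ℕ∞) x U
  heq1 : ∀ p ∈ U, Jac x p = Ω p * (Λg p)ᵀ
  heq2 : ∀ p ∈ U, IOm Ω p = IOmg p
  heq3 : ∀ p ∈ U, IIOm Ω p = IIOmg p
  hpos : ∀ p ∈ U, 0 < (IOmg p).det

namespace Good

variable {U : Set Pt} {IOmg IIOmg Λg : Pt → Matrix (Fin 2) (Fin 2) ℝ}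
  {x : Pt → Vec3} {Ω : Pt → Matrix (Fin 3) (Fin 2) ℝ} {p : Pt} {j : Fin 2}
  (self : Good U IOmg IIOmg Λg x Ω) (hp : p ∈ U)

include self hp

lemma Sfn_pos : 0 < Sfn Ω p := by
  rw [lagrange, self.heq2 p hp]; exact self.hpos p hp

lemma IOm_sum (l k : Fin 2) : ∑ i, Ω p i l * Ω p i k = IOmg p l k := by
  rw [← self.heq2 p hp]
  simp [IOm, Matrix.mul_apply]

lemma Bm_cd (i k : Fin 3) : ContDiffAt ℝ (⊤ : ℕ∞) (fun q => Bm Ω q i k) p :=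
  Bm_contDiffAt self.hU self.hsm hp (self.Sfn_pos hp) i k

lemma Bm_dAt (i k : Fin 3) : DifferentiableAt ℝ (fun q => Bm Ω q i k) p :=
  (self.Bm_cd hp i k).differentiableAt (by simp)

lemma entry_dAt (i : Fin 3) (k : Fin 2) : DifferentiableAt ℝ (fun q => Ω q i k) p :=
  (entry_contDiffAt self.hU self.hsm hp i k).differentiableAt (by simp)

/-- the Gram matrix of the adapted frame -/
lemma gramEq : (Bm Ω p)ᵀ * Bm Ω p = gram (IOmg p) := by
  have h1 := self.IOm_sum hp
  have h2 := nor_dot_col (Ω := Ω) (q := p)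
  have h3 := nor_dot_self (Ω := Ω) (q := p) (self.Sfn_pos hp)
  ext a b
  rw [Matrix.mul_apply]
  fin_cases a <;> fin_cases b <;>
    simp only [Matrix.transpose_apply, Bm_apply0, Bm_apply1, Bm_apply2, gram,
      Matrix.of_apply, Matrix.cons_val_zero, Matrix.cons_val_one, Matrix.head_cons,
      Matrix.cons_val_two, Matrix.tail_cons, Fin.isValue]
  · exact h1 0 0
  · exact h1 0 1
  · exact (Finset.sum_congr rfl fun i _ => mul_comm _ _).trans (h2 0)
  · exact h1 1 0
  · exact h1 1 1
  · exact (Finset.sum_congr rfl fun i _ => mul_comm _ _).trans (h2 1)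
  · exact h2 0
  · exact h2 1
  · exact h3

/-- K1: symmetrized frame-derivative Gram identity -/
lemma K1 (a b : Fin 3) :
    (∑ i, Bm Ω p i a * pd j (fun q => Bm Ω q i b) p)
      + (∑ i, Bm Ω p i b * pd j (fun q => Bm Ω q i a) p)
      = pd j (fun q => gram (IOmg q) a b) p := by
  have hev : (fun q => gram (IOmg q) a b) =ᶠ[nhds p]
      (fun q => ∑ i, Bm Ω q i a * Bm Ω q i b) := by
    filter_upwards [self.hU.mem_nhds hp] with q hq
    have := congrFun (congrFun (self.gramEq hq) a) b
    rw [Matrix.mul_apply] at this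
    simp only [Matrix.transpose_apply] at this
    exact this.symm
  rw [pd_congr_nhds hev]
  have hd := fun i k => self.Bm_dAt hp i k
  have h1 : (fun q => ∑ i, Bm Ω q i a * Bm Ω q i b)
      = fun q => (fun q' => fun i => Bm Ω q' i a) q ⬝ᵥ (fun q' => fun i => Bm Ω q' i b) q := by
    funext q; simp [dotProduct]
  rw [h1, pd_dot (fun i => hd i a) (fun i => hd i b), Finset.sum_add_distrib, add_comm]
  congr 1
  exact Finset.sum_congr rfl fun i _ => mul_comm _ _

/-- K3: normal coefficients of the frame derivative -/
lemma K3 (l : Fin 2) :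
    (∑ i, Ω p i l * pd j (fun q => nor Ω q i) p) = -(IIOmg p l j) := by
  have h := congrFun (congrFun (self.heq3 p hp) l) j
  rw [IIOm] at h
  rw [← h]
  simp [Matrix.mul_apply, Jac, pd]

end Good
end FTF
namespace FTF
namespace Good

variable {U : Set Pt} {IOmg IIOmg Λg : Pt → Matrix (Fin 2) (Fin 2) ℝ}
  {x : Pt → Vec3} {Ω : Pt → Matrix (Fin 3) (Fin 2) ℝ} {p : Pt}
  (self : Good U IOmg IIOmg Λg x Ω) (hp : p ∈ U)

include self hp

lemma lam_dAt (a b : Fin 2) : DifferentiableAt ℝ (fun q => Λg q a b) p :=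
  ((self.hΛsm a b).contDiffAt (self.hU.mem_nhds hp)).differentiableAt (by simp)

/-- the integrability identity coming from symmetry of second derivatives of `x` -/
lemma intK (l : Fin 2) :
    ∑ k, (Λg p 1 k * (∑ i, Ω p i l * pd 0 (fun q => Ω q i k) p)
          + IOmg p l k * pd 0 (fun q => Λg q 1 k) p)
    = ∑ k, (Λg p 0 k * (∑ i, Ω p i l * pd 1 (fun q => Ω q i k) p)
          + IOmg p l k * pd 1 (fun q => Λg q 0 k) p) := by
  have hxa : ∀ i : Fin 3, ContDiffAt ℝ (⊤ : ℕ∞) (fun q => x q i) p := fun i =>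
    contDiffAt_pi.mp (self.hx.contDiffAt (self.hU.mem_nhds hp)) i
  have hexp : ∀ (i : Fin 3) (j' jj : Fin 2),
      pd j' (fun q => pd jj (fun q' => x q' i) q) p
        = ∑ k, (pd j' (fun q => Ω q i k) p * Λg p jj k
            + Ω p i k * pd j' (fun q => Λg q jj k) p) := by
    intro i j' jj
    have hev : (fun q => pd jj (fun q' => x q' i) q) =ᶠ[nhds p]
        (fun q => ∑ k, Ω q i k * Λg q jj k) := by
      filter_upwards [self.hU.mem_nhds hp] with q hq
      have h1 : pd jj (fun q' => x q' i) q = Jac x q i jj := rfl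
      rw [h1, self.heq1 q hq]
      simp [Matrix.mul_apply]
    rw [pd_congr_nhds hev,
      pd_sum _ (fun k _ => (self.entry_dAt hp i k).fun_mul (self.lam_dAt hp jj k))]
    exact Finset.sum_congr rfl fun k _ => pd_mul (self.entry_dAt hp i k) (self.lam_dAt hp jj k)
  have hstep : ∀ i : Fin 3,
      ∑ k, (pd 0 (fun q => Ω q i k) p * Λg p 1 k + Ω p i k * pd 0 (fun q => Λg q 1 k) p)
      = ∑ k, (pd 1 (fun q => Ω q i k) p * Λg p 0 k + Ω p i k * pd 1 (fun q => Λg q 0 k) p) := by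
    intro i
    rw [← hexp i 0 1, ← hexp i 1 0]
    exact pd_symm (hxa i)
  have h4 : ∀ (j' jj : Fin 2),
      ∑ k, (Λg p jj k * (∑ i, Ω p i l * pd j' (fun q => Ω q i k) p)
            + IOmg p l k * pd j' (fun q => Λg q jj k) p)
      = ∑ i, Ω p i l * (∑ k, (pd j' (fun q => Ω q i k) p * Λg p jj k
            + Ω p i k * pd j' (fun q => Λg q jj k) p)) := by
    intro j' jj
    simp only [← self.IOm_sum hp, Finset.mul_sum, Finset.sum_mul, ← Finset.sum_add_distrib]
    rw [Finset.sum_comm]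
    exact Finset.sum_congr rfl fun i _ => Finset.sum_congr rfl fun k _ => by ring
  rw [h4 0 1, h4 1 0]
  exact Finset.sum_congr rfl fun i _ => congrArg _ (hstep i)

end Good
end FTF
namespace FTF
namespace Good

variable {U : Set Pt} {IOmg IIOmg Λg : Pt → Matrix (Fin 2) (Fin 2) ℝ}
  {x xb : Pt → Vec3} {Ω Ωb : Pt → Matrix (Fin 3) (Fin 2) ℝ} {p : Pt}

/-- tangential connection coefficients agree at points where `det Λ ≠ 0` -/
lemma tang_eq (self : Good U IOmg IIOmg Λg x Ω) (selfb : Good U IOmg IIOmg Λg xb Ωb)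
    (hp : p ∈ U) (hdet : (Λg p).det ≠ 0) :
    ∀ (j l k : Fin 2), ∑ i, Ω p i l * pd j (fun q => Ω q i k) p
      = ∑ i, Ωb p i l * pd j (fun q => Ωb q i k) p := by
  have sym : ∀ (j l k : Fin 2),
      (∑ i, Ω p i l * pd j (fun q => Ω q i k) p)
        + (∑ i, Ω p i k * pd j (fun q => Ω q i l) p)
      = (∑ i, Ωb p i l * pd j (fun q => Ωb q i k) p)
        + (∑ i, Ωb p i k * pd j (fun q => Ωb q i l) p) := by
    intro j l k
    fin_cases l <;> fin_cases k
    · exact (self.K1 hp (j := j) 0 0).trans (selfb.K1 hp (j := j) 0 0).symm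
    · exact (self.K1 hp (j := j) 0 1).trans (selfb.K1 hp (j := j) 0 1).symm
    · exact (self.K1 hp (j := j) 1 0).trans (selfb.K1 hp (j := j) 1 0).symm
    · exact (self.K1 hp (j := j) 1 1).trans (selfb.K1 hp (j := j) 1 1).symm
  have h10 := self.intK hp 0
  have h1b0 := selfb.intK hp 0
  have h11 := self.intK hp 1
  have h1b1 := selfb.intK hp 1
  simp only [Fin.sum_univ_two] at h10 h1b0 h11 h1b1
  set t000 := ∑ i, Ω p i 0 * pd 0 (fun q => Ω q i 0) p with ht000
  set t001 := ∑ i, Ω p i 0 * pd 0 (fun q => Ω q i 1) p with ht001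
  set t010 := ∑ i, Ω p i 1 * pd 0 (fun q => Ω q i 0) p with ht010
  set t011 := ∑ i, Ω p i 1 * pd 0 (fun q => Ω q i 1) p with ht011
  set t100 := ∑ i, Ω p i 0 * pd 1 (fun q => Ω q i 0) p with ht100
  set t101 := ∑ i, Ω p i 0 * pd 1 (fun q => Ω q i 1) p with ht101
  set t110 := ∑ i, Ω p i 1 * pd 1 (fun q => Ω q i 0) p with ht110
  set t111 := ∑ i, Ω p i 1 * pd 1 (fun q => Ω q i 1) p with ht111
  set s000 := ∑ i, Ωb p i 0 * pd 0 (fun q => Ωb q i 0) p with hs000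
  set s001 := ∑ i, Ωb p i 0 * pd 0 (fun q => Ωb q i 1) p with hs001
  set s010 := ∑ i, Ωb p i 1 * pd 0 (fun q => Ωb q i 0) p with hs010
  set s011 := ∑ i, Ωb p i 1 * pd 0 (fun q => Ωb q i 1) p with hs011
  set s100 := ∑ i, Ωb p i 0 * pd 1 (fun q => Ωb q i 0) p with hs100
  set s101 := ∑ i, Ωb p i 0 * pd 1 (fun q => Ωb q i 1) p with hs101
  set s110 := ∑ i, Ωb p i 1 * pd 1 (fun q => Ωb q i 0) p with hs110
  set s111 := ∑ i, Ωb p i 1 * pd 1 (fun q => Ωb q i 1) p with hs111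
  have sy000 := sym 0 0 0
  have sy001 := sym 0 0 1
  have sy011 := sym 0 1 1
  have sy100 := sym 1 0 0
  have sy101 := sym 1 0 1
  have sy111 := sym 1 1 1
  simp only [← ht000, ← ht001, ← ht010, ← ht011, ← ht100, ← ht101, ← ht110, ← ht111,
    ← hs000, ← hs001, ← hs010, ← hs011, ← hs100, ← hs101, ← hs110, ← hs111] at *
  -- diagonal equalities
  have d00 : t000 = s000 := by linarith
  have d01 : t011 = s011 := by linarith
  have d10 : t100 = s100 := by linarith
  have d11 : t111 = s111 := by linarith
  -- the two linear equations for the antisymmetric parts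
  have hl0 : Λg p 1 1 * (t001 - s001) = Λg p 0 1 * (t101 - s101) := by
    linear_combination h10 - h1b0 - Λg p 1 0 * d00 + Λg p 0 0 * d10
  have hl1 : Λg p 1 0 * (t010 - s010) = Λg p 0 0 * (t110 - s110) := by
    linear_combination h11 - h1b1 - Λg p 1 1 * d01 + Λg p 0 1 * d11
  -- antisymmetry
  have a0 : t010 - s010 = -(t001 - s001) := by linarith
  have a1 : t110 - s110 = -(t101 - s101) := by linarith
  have hdet2 : Λg p 0 0 * Λg p 1 1 - Λg p 0 1 * Λg p 1 0 ≠ 0 := by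
    rwa [Matrix.det_fin_two] at hdet
  have e2 : Λg p 1 0 * (t001 - s001) = Λg p 0 0 * (t101 - s101) := by
    linear_combination Λg p 1 0 * a0 - Λg p 0 0 * a1 - hl1
  have hd0 : t001 - s001 = 0 := by
    have h5 : (Λg p 0 0 * Λg p 1 1 - Λg p 0 1 * Λg p 1 0) * (t001 - s001) = 0 := by
      linear_combination Λg p 0 0 * hl0 - Λg p 0 1 * e2
    exact (mul_eq_zero.mp h5).resolve_left hdet2
  have hd1 : t101 - s101 = 0 := by
    have h5 : (Λg p 0 0 * Λg p 1 1 - Λg p 0 1 * Λg p 1 0) * (t101 - s101) = 0 := by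
      linear_combination Λg p 1 0 * hl0 - Λg p 1 1 * e2
    exact (mul_eq_zero.mp h5).resolve_left hdet2
  have e010 : t010 = s010 := by linarith
  have e110 : t110 = s110 := by linarith
  have e001 : t001 = s001 := by linarith
  have e101 : t101 = s101 := by linarith
  intro j l k
  fin_cases j <;> fin_cases l <;> fin_cases k
  · exact d00
  · exact e001
  · exact e010
  · exact d01
  · exact d10
  · exact e101
  · exact e110
  · exact d11

end Good
end FTF
namespace FTF

lemma pdM_congr_nhds {m n : ℕ} {p : Pt} {j : Fin 2} {A C : Pt → Matrix (Fin m) (Fin n) ℝ}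
    (h : ∀ᶠ q in nhds p, A q = C q) : pdM j A p = pdM j C p := by
  ext i k
  exact pd_congr_nhds (h.mono fun q hq => congrFun (congrFun hq i) k)

/-- explicit inverse of the frame Gram matrix -/
def gInv (M : Matrix (Fin 2) (Fin 2) ℝ) : Matrix (Fin 3) (Fin 3) ℝ :=
  (M.det)⁻¹ • Matrix.of fun a b =>
    ![![M 1 1, -(M 0 1), 0], ![-(M 1 0), M 0 0, 0], ![0, 0, M.det]] a b

lemma gInv_mul {M : Matrix (Fin 2) (Fin 2) ℝ} (h : M.det ≠ 0) : gInv M * gram M = 1 := by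
  rw [Matrix.det_fin_two] at h
  ext a b
  fin_cases a <;> fin_cases b <;>
    simp [gInv, gram, Matrix.mul_apply, Fin.sum_univ_three, Matrix.det_fin_two,
      Matrix.one_apply] <;> field_simp <;> ring

namespace Good

variable {U : Set Pt} {IOmg IIOmg Λg : Pt → Matrix (Fin 2) (Fin 2) ℝ}
  {x xb : Pt → Vec3} {Ω Ωb : Pt → Matrix (Fin 3) (Fin 2) ℝ} {p : Pt} {j : Fin 2}

/-- the full frame-derivative Gram identity at points with `det Λ ≠ 0` -/
lemma Bgram_eq (self : Good U IOmg IIOmg Λg x Ω) (selfb : Good U IOmg IIOmg Λg xb Ωb)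
    (hp : p ∈ U) (hdet : (Λg p).det ≠ 0) (j : Fin 2) :
    (Bm Ω p)ᵀ * pdM j (Bm Ω) p = (Bm Ωb p)ᵀ * pdM j (Bm Ωb) p := by
  have ht := tang_eq self selfb hp hdet
  have hz0 : pd j (fun q => gram (IOmg q) 2 0) p = 0 := pd_const 0
  have hz1 : pd j (fun q => gram (IOmg q) 2 1) p = 0 := pd_const 0
  have hz2 : pd j (fun q => gram (IOmg q) 2 2) p = 0 := pd_const 1
  have c0 : (∑ i, Bm Ω p i 0 * pd j (fun q => Bm Ω q i 2) p) = -(IIOmg p 0 j) :=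
    self.K3 hp 0
  have c1 : (∑ i, Bm Ω p i 1 * pd j (fun q => Bm Ω q i 2) p) = -(IIOmg p 1 j) :=
    self.K3 hp 1
  have c0b : (∑ i, Bm Ωb p i 0 * pd j (fun q => Bm Ωb q i 2) p) = -(IIOmg p 0 j) :=
    selfb.K3 hp 0
  have c1b : (∑ i, Bm Ωb p i 1 * pd j (fun q => Bm Ωb q i 2) p) = -(IIOmg p 1 j) :=
    selfb.K3 hp 1
  ext a b
  simp only [Matrix.mul_apply, Matrix.transpose_apply, pdM, Matrix.of_apply]
  fin_cases a <;> fin_cases b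
  · exact ht j 0 0
  · exact ht j 0 1
  · exact c0.trans c0b.symm
  · exact ht j 1 0
  · exact ht j 1 1
  · exact c1.trans c1b.symm
  · have k1 := self.K1 hp (j := j) 2 0
    have k1b := selfb.K1 hp (j := j) 2 0
    rw [hz0] at k1 k1b
    show (∑ i, Bm Ω p i 2 * pd j (fun q => Bm Ω q i 0) p)
      = ∑ i, Bm Ωb p i 2 * pd j (fun q => Bm Ωb q i 0) p
    linarith [c0, c0b, k1, k1b]
  · have k1 := self.K1 hp (j := j) 2 1
    have k1b := selfb.K1 hp (j := j) 2 1
    rw [hz1] at k1 k1b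
    show (∑ i, Bm Ω p i 2 * pd j (fun q => Bm Ω q i 1) p)
      = ∑ i, Bm Ωb p i 2 * pd j (fun q => Bm Ωb q i 1) p
    linarith [c1, c1b, k1, k1b]
  · have k1 := self.K1 hp (j := j) 2 2
    have k1b := selfb.K1 hp (j := j) 2 2
    rw [hz2] at k1 k1b
    show (∑ i, Bm Ω p i 2 * pd j (fun q => Bm Ω q i 2) p)
      = ∑ i, Bm Ωb p i 2 * pd j (fun q => Bm Ωb q i 2) p
    linarith [k1, k1b]

end Good
end FTF
namespace FTF

def rhoF (IOmg : Pt → Matrix (Fin 2) (Fin 2) ℝ) (Ω Ωb : Pt → Matrix (Fin 3) (Fin 2) ℝ)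
    (q : Pt) : Matrix (Fin 3) (Fin 3) ℝ :=
  Bm Ωb q * (gInv (IOmg q) * (Bm Ω q)ᵀ)

namespace Good

variable {U : Set Pt} {IOmg IIOmg Λg : Pt → Matrix (Fin 2) (Fin 2) ℝ}
  {x xb : Pt → Vec3} {Ω Ωb : Pt → Matrix (Fin 3) (Fin 2) ℝ} {p : Pt} {j : Fin 2}

lemma detI_ne (self : Good U IOmg IIOmg Λg x Ω) (hp : p ∈ U) : (IOmg p).det ≠ 0 :=
  (self.hpos p hp).ne'

lemma Bdet_ne (self : Good U IOmg IIOmg Λg x Ω) (hp : p ∈ U) : (Bm Ω p).det ≠ 0 := by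
  rw [Bm_det (self.Sfn_pos hp)]
  exact Real.sqrt_ne_zero'.mpr (self.Sfn_pos hp)

lemma invB (self : Good U IOmg IIOmg Λg x Ω) (hp : p ∈ U) :
    (Bm Ω p)⁻¹ = gInv (IOmg p) * (Bm Ω p)ᵀ := by
  apply Matrix.inv_eq_left_inv
  rw [Matrix.mul_assoc, self.gramEq hp]
  exact gInv_mul (self.detI_ne hp)

lemma gInv_cd (self : Good U IOmg IIOmg Λg x Ω) (hp : p ∈ U)
    (hI : ∀ a b : Fin 2, ContDiffAt ℝ (⊤ : ℕ∞) (fun q => IOmg q a b) p) (a b : Fin 3) :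
    ContDiffAt ℝ (⊤ : ℕ∞) (fun q => gInv (IOmg q) a b) p := by
  have hdetf : ContDiffAt ℝ (⊤ : ℕ∞) (fun q => (IOmg q).det) p := by
    have h1 : (fun q => (IOmg q).det)
        = fun q => IOmg q 0 0 * IOmg q 1 1 - IOmg q 0 1 * IOmg q 1 0 :=
      funext fun q => Matrix.det_fin_two _
    rw [h1]
    exact ((hI 0 0).mul (hI 1 1)).sub ((hI 0 1).mul (hI 1 0))
  have hinv : ContDiffAt ℝ (⊤ : ℕ∞) (fun q => ((IOmg q).det)⁻¹) p :=
    hdetf.inv (self.detI_ne hp)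
  fin_cases a <;> fin_cases b
  · exact hinv.mul (hI 1 1)
  · exact hinv.mul ((hI 0 1).neg)
  · exact hinv.mul contDiffAt_const
  · exact hinv.mul ((hI 1 0).neg)
  · exact hinv.mul (hI 0 0)
  · exact hinv.mul contDiffAt_const
  · exact hinv.mul contDiffAt_const
  · exact hinv.mul contDiffAt_const
  · exact hinv.mul hdetf

lemma rho_cd (self : Good U IOmg IIOmg Λg x Ω) (selfb : Good U IOmg IIOmg Λg xb Ωb)
    (hp : p ∈ U) (hI : ∀ a b : Fin 2, ContDiffAt ℝ (⊤ : ℕ∞) (fun q => IOmg q a b) p)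
    (i k : Fin 3) : ContDiffAt ℝ (⊤ : ℕ∞) (fun q => rhoF IOmg Ω Ωb q i k) p := by
  exact contDiffAt_mul_entry (selfb.Bm_cd hp)
    (contDiffAt_mul_entry (self.gInv_cd hp hI) (fun a b => self.Bm_cd hp b a)) i k

lemma rho_mul_B (self : Good U IOmg IIOmg Λg x Ω) (selfb : Good U IOmg IIOmg Λg xb Ωb)
    (hp : p ∈ U) : rhoF IOmg Ω Ωb p * Bm Ω p = Bm Ωb p := by
  rw [rhoF, Matrix.mul_assoc, Matrix.mul_assoc, self.gramEq hp,
    gInv_mul (self.detI_ne hp), Matrix.mul_one]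

lemma pdM_rho_zero (self : Good U IOmg IIOmg Λg x Ω) (selfb : Good U IOmg IIOmg Λg xb Ωb)
    (hp : p ∈ U) (hI : ∀ a b : Fin 2, ContDiffAt ℝ (⊤ : ℕ∞) (fun q => IOmg q a b) p)
    (hdet : (Λg p).det ≠ 0) (j : Fin 2) : pdM j (rhoF IOmg Ω Ωb) p = 0 := by
  have hrd : ∀ i k : Fin 3, DifferentiableAt ℝ (fun q => rhoF IOmg Ω Ωb q i k) p :=
    fun i k => (self.rho_cd selfb hp hI i k).differentiableAt (by simp)
  have h1 : pdM j (fun q => rhoF IOmg Ω Ωb q * Bm Ω q) p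
      = pdM j (rhoF IOmg Ω Ωb) p * Bm Ω p + rhoF IOmg Ω Ωb p * pdM j (Bm Ω) p :=
    pdM_mul hrd (self.Bm_dAt hp)
  have h2 : pdM j (fun q => rhoF IOmg Ω Ωb q * Bm Ω q) p = pdM j (Bm Ωb) p := by
    apply pdM_congr_nhds
    filter_upwards [self.hU.mem_nhds hp] with q hq
    exact self.rho_mul_B selfb hq
  have h3 : (Bm Ω p)ᵀ * pdM j (Bm Ω) p = (Bm Ωb p)ᵀ * pdM j (Bm Ωb) p :=
    self.Bgram_eq selfb hp hdet j
  have hBb1 : (gInv (IOmg p) * (Bm Ωb p)ᵀ) * Bm Ωb p = 1 := by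
    rw [Matrix.mul_assoc, selfb.gramEq hp]
    exact gInv_mul (self.detI_ne hp)
  have hBb2 : Bm Ωb p * (gInv (IOmg p) * (Bm Ωb p)ᵀ) = 1 :=
    mul_eq_one_comm.mpr hBb1
  have hRD : rhoF IOmg Ω Ωb p * pdM j (Bm Ω) p = pdM j (Bm Ωb) p := by
    calc rhoF IOmg Ω Ωb p * pdM j (Bm Ω) p
        = Bm Ωb p * (gInv (IOmg p) * ((Bm Ω p)ᵀ * pdM j (Bm Ω) p)) := by
          rw [rhoF]; simp only [Matrix.mul_assoc]
      _ = Bm Ωb p * (gInv (IOmg p) * ((Bm Ωb p)ᵀ * pdM j (Bm Ωb) p)) := by rw [h3]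
      _ = (Bm Ωb p * (gInv (IOmg p) * (Bm Ωb p)ᵀ)) * pdM j (Bm Ωb) p := by
          simp only [Matrix.mul_assoc]
      _ = pdM j (Bm Ωb) p := by rw [hBb2, Matrix.one_mul]
  have h5 := h1.symm.trans h2
  rw [hRD] at h5
  have h4 : pdM j (rhoF IOmg Ω Ωb) p * Bm Ω p = 0 := add_eq_right.mp h5
  have hBu : IsUnit (Bm Ω p).det := isUnit_iff_ne_zero.mpr (self.Bdet_ne hp)
  calc pdM j (rhoF IOmg Ω Ωb) p
      = pdM j (rhoF IOmg Ω Ωb) p * (Bm Ω p * (Bm Ω p)⁻¹) := by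
        rw [Matrix.mul_nonsing_inv _ hBu, Matrix.mul_one]
    _ = (pdM j (rhoF IOmg Ω Ωb) p * Bm Ω p) * (Bm Ω p)⁻¹ := by
        rw [Matrix.mul_assoc]
    _ = 0 := by rw [h4, Matrix.zero_mul]

lemma rho_orth (self : Good U IOmg IIOmg Λg x Ω) (selfb : Good U IOmg IIOmg Λg xb Ωb)
    (hp : p ∈ U) : (rhoF IOmg Ω Ωb p)ᵀ * rhoF IOmg Ω Ωb p = 1 := by
  have hre : rhoF IOmg Ω Ωb p = Bm Ωb p * (Bm Ω p)⁻¹ := by rw [rhoF, self.invB hp]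
  have e1 : (Bm Ωb p)ᵀ * Bm Ωb p = (Bm Ω p)ᵀ * Bm Ω p :=
    (selfb.gramEq hp).trans (self.gramEq hp).symm
  have hBu : IsUnit (Bm Ω p).det := isUnit_iff_ne_zero.mpr (self.Bdet_ne hp)
  rw [hre, Matrix.transpose_mul]
  calc ((Bm Ω p)⁻¹ᵀ * (Bm Ωb p)ᵀ) * (Bm Ωb p * (Bm Ω p)⁻¹)
      = (Bm Ω p)⁻¹ᵀ * (((Bm Ωb p)ᵀ * Bm Ωb p) * (Bm Ω p)⁻¹) := by
        simp only [Matrix.mul_assoc]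
    _ = (Bm Ω p)⁻¹ᵀ * (((Bm Ω p)ᵀ * Bm Ω p) * (Bm Ω p)⁻¹) := by rw [e1]
    _ = (Bm Ω p)⁻¹ᵀ * ((Bm Ω p)ᵀ * (Bm Ω p * (Bm Ω p)⁻¹)) := by
        simp only [Matrix.mul_assoc]
    _ = (Bm Ω p)⁻¹ᵀ * (Bm Ω p)ᵀ := by rw [Matrix.mul_nonsing_inv _ hBu, Matrix.mul_one]
    _ = (Bm Ω p * (Bm Ω p)⁻¹)ᵀ := by rw [Matrix.transpose_mul]
    _ = 1 := by rw [Matrix.mul_nonsing_inv _ hBu, Matrix.transpose_one]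

lemma rho_det (self : Good U IOmg IIOmg Λg x Ω) (selfb : Good U IOmg IIOmg Λg xb Ωb)
    (hp : p ∈ U) : (rhoF IOmg Ω Ωb p).det = 1 := by
  have hre : rhoF IOmg Ω Ωb p = Bm Ωb p * (Bm Ω p)⁻¹ := by rw [rhoF, self.invB hp]
  have hdb : (Bm Ωb p).det = (Bm Ω p).det := by
    rw [Bm_det (self.Sfn_pos hp), Bm_det (selfb.Sfn_pos hp),
      lagrange, lagrange, self.heq2 p hp, selfb.heq2 p hp]
  rw [hre, Matrix.det_mul, hdb, Matrix.det_nonsing_inv]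
  rw [Ring.inverse_eq_inv]
  exact mul_inv_cancel₀ (self.Bdet_ne hp)

end Good
end FTF
namespace FTF
variable {U V : Set Pt} {p : Pt} {j : Fin 2} {f : Pt → ℝ}

lemma pd_continuousAt (hf : ContDiffAt ℝ (⊤ : ℕ∞) f p) :
    ContinuousAt (fun q => pd j f q) p := by
  have h1 : ContDiffAt ℝ 1 (fderiv ℝ f) p := hf.fderiv_right (m := 1) (WithTop.coe_le_coe.mpr le_top)
  have h2 : ContinuousAt (fderiv ℝ f) p := h1.continuousAt
  exact ((ContinuousLinearMap.apply ℝ ℝ (pdir j)).continuous.continuousAt).comp h2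

lemma pd_eq_zero_of_dense (hf : ∀ q ∈ U, ContDiffAt ℝ (⊤ : ℕ∞) f q)
    (hz : ∀ q ∈ V, pd j f q = 0) (hcl : p ∈ closure V) (hp : p ∈ U) :
    pd j f p = 0 := by
  have hc : ContinuousAt (fun q => pd j f q) p := pd_continuousAt (hf p hp)
  have hne : (nhdsWithin p V).NeBot := mem_closure_iff_nhdsWithin_neBot.mp hcl
  have t1 : Tendsto (fun q => pd j f q) (nhdsWithin p V) (nhds (pd j f p)) :=
    hc.tendsto.mono_left nhdsWithin_le_nhds
  have t2 : Tendsto (fun q => pd j f q) (nhdsWithin p V) (nhds 0) := by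
    apply Tendsto.congr' _ tendsto_const_nhds
    exact (eventually_nhdsWithin_of_forall hz).mono fun q hq => hq.symm
  exact tendsto_nhds_unique t1 t2

lemma const_on_of_pd_zero (hU : IsOpen U) (hconn : IsPreconnected U)
    (hf : ∀ q ∈ U, ContDiffAt ℝ (⊤ : ℕ∞) f q) (hz : ∀ q ∈ U, ∀ j : Fin 2, pd j f q = 0)
    {p₀ : Pt} (h0 : p₀ ∈ U) (hp : p ∈ U) : f p = f p₀ := by
  have loc : ∀ q ∈ U, ∃ ε > 0, Metric.ball q ε ⊆ U ∧ ∀ r ∈ Metric.ball q ε, f r = f q := by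
    intro q hq
    obtain ⟨ε, hε, hball⟩ := Metric.isOpen_iff.mp hU q hq
    refine ⟨ε, hε, hball, fun r hr => ?_⟩
    have hdiff : DifferentiableOn ℝ f (Metric.ball q ε) := fun z hz' =>
      ((hf z (hball hz')).differentiableAt (by simp)).differentiableWithinAt
    have hfz : ∀ z ∈ Metric.ball q ε, fderivWithin ℝ f (Metric.ball q ε) z = 0 := by
      intro z hz'
      rw [fderivWithin_of_isOpen Metric.isOpen_ball hz']
      exact fderiv_zero_of_pd (hz z (hball hz') 0) (hz z (hball hz') 1)
    exact (convex_ball q ε).is_const_of_fderivWithin_eq_zero hdiff hfz hr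
      (Metric.mem_ball_self hε)
  by_contra hne
  set A : Set Pt := {q | q ∈ U ∧ f q = f p₀} with hA
  set B : Set Pt := {q | q ∈ U ∧ f q ≠ f p₀} with hB
  have hAopen : IsOpen A := by
    rw [Metric.isOpen_iff]
    intro q hq
    obtain ⟨ε, hε, hball, hconst⟩ := loc q hq.1
    exact ⟨ε, hε, fun r hr => ⟨hball hr, (hconst r hr).trans hq.2⟩⟩
  have hBopen : IsOpen B := by
    rw [Metric.isOpen_iff]
    intro q hq
    obtain ⟨ε, hε, hball, hconst⟩ := loc q hq.1
    exact ⟨ε, hε, fun r hr => ⟨hball hr, by rw [hconst r hr]; exact hq.2⟩⟩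
  have hsub : U ⊆ A ∪ B := fun q hq => by
    by_cases h : f q = f p₀
    · exact Or.inl ⟨hq, h⟩
    · exact Or.inr ⟨hq, h⟩
  have hAne : (U ∩ A).Nonempty := ⟨p₀, h0, h0, rfl⟩
  have hBne : (U ∩ B).Nonempty := ⟨p, hp, hp, hne⟩
  obtain ⟨z, _, hzA, hzB⟩ := hconn A B hAopen hBopen hsub hAne hBne
  exact hzB.2 hzA.2

end FTF
namespace FTF
variable {p : Pt} {j : Fin 2}

lemma pd_sub {a b : Pt → ℝ} (ha : DifferentiableAt ℝ a p) (hb : DifferentiableAt ℝ b p) :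
    pd j (fun q => a q - b q) p = pd j a p - pd j b p := by
  unfold pd; rw [fderiv_fun_sub ha hb]; simp

lemma pd_cmul {a : Pt → ℝ} (c : ℝ) (ha : DifferentiableAt ℝ a p) :
    pd j (fun q => c * a q) p = c * pd j a p := by
  unfold pd; rw [fderiv_const_mul ha]; simp

end FTF

open FTF

/-- the fundamental theorem for proper frontals (rigidity part). -/
theorem fundamental_theorem_frontals_rigidity
    (U : Set Pt) (hU : IsOpen U) (hconn : IsConnected U)
    (E F G e f g : Pt → ℝ)
    (hE : ContDiffOn ℝ (⊤ : ℕ∞) E U) (hF : ContDiffOn ℝ (⊤ : ℕ∞) F U) (hG : ContDiffOn ℝ (⊤ : ℕ∞) G U)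
    (he : ContDiffOn ℝ (⊤ : ℕ∞) e U) (hf : ContDiffOn ℝ (⊤ : ℕ∞) f U) (hg : ContDiffOn ℝ (⊤ : ℕ∞) g U)
    (hEnn : ∀ p ∈ U, 0 ≤ E p) (hGnn : ∀ p ∈ U, 0 ≤ G p)
    (hdetnn : ∀ p ∈ U, 0 ≤ E p * G p - F p ^ 2)
    (Λg IOmg IIOmg : Pt → Matrix (Fin 2) (Fin 2) ℝ)
    (hΛs : SmoothMatOn U Λg) (hIOs : SmoothMatOn U IOmg) (hIIs : SmoothMatOn U IIOmg)
    (hIOsym : ∀ p ∈ U, IOmg p 1 0 = IOmg p 0 1)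
    (hEOm : ∀ p ∈ U, 0 < IOmg p 0 0) (hGOm : ∀ p ∈ U, 0 < IOmg p 1 1)
    (hdOm : ∀ p ∈ U, 0 < IOmg p 0 0 * IOmg p 1 1 - IOmg p 0 1 ^ 2)
    (hdec1 : ∀ p ∈ U, !![E p, F p; F p, G p] = Λg p * IOmg p * (Λg p)ᵀ)
    (hdec2 : ∀ p ∈ U, !![e p, f p; f p, g p] = Λg p * IIOmg p)
    (hint : interior {p ∈ U | (Λg p).det = 0} = ∅)
    (hid1 : ∃ h : Pt → ℝ, ContDiffOn ℝ (⊤ : ℕ∞) h U ∧ ∀ p ∈ U,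
      (fun k => pd 0 (fun q => Λg q 0 k) p) ⬝ᵥ (IOmg p *ᵥ Λg p 1)
        - Λg p 0 ⬝ᵥ (IOmg p *ᵥ fun k => pd 0 (fun q => Λg q 1 k) p)
        + pd 1 E p - pd 0 F p = h p * (Λg p).det)
    (hid2 : ∃ h : Pt → ℝ, ContDiffOn ℝ (⊤ : ℕ∞) h U ∧ ∀ p ∈ U,
      (fun k => pd 1 (fun q => Λg q 0 k) p) ⬝ᵥ (IOmg p *ᵥ Λg p 1)
        - Λg p 0 ⬝ᵥ (IOmg p *ᵥ fun k => pd 1 (fun q => Λg q 1 k) p)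
        + pd 1 F p - pd 0 G p = h p * (Λg p).det)
    (hGauss : ∀ p ∈ U, (Λg p).det ≠ 0 →
      pd 0 (fun q => Gam2 E F G q 0 1) p - pd 1 (fun q => Gam1 E F G q 0 1) p
        + Gam2 E F G p 0 0 * Gam1 E F G p 0 1 + Gam2 E F G p 0 1 * Gam1 E F G p 1 1
        - Gam1 E F G p 0 1 * Gam2 E F G p 1 1 - Gam1 E F G p 0 0 * Gam2 E F G p 0 1
      = -(E p) * ((e p * g p - f p ^ 2) / (E p * G p - F p ^ 2)))
    (hMC1 : ∀ p ∈ U, (Λg p).det ≠ 0 →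
      pd 1 e p - pd 0 f p = e p * Gam2 E F G p 0 0
        + f p * (Gam2 E F G p 0 1 - Gam1 E F G p 0 0) - g p * Gam1 E F G p 0 1)
    (hMC2 : ∀ p ∈ U, (Λg p).det ≠ 0 →
      pd 1 f p - pd 0 g p = e p * Gam2 E F G p 1 0
        + f p * (Gam2 E F G p 1 1 - Gam2 E F G p 0 0) - g p * Gam2 E F G p 0 1)
    (x xb : Pt → Vec3) (Ω Ωb : Pt → Matrix (Fin 3) (Fin 2) ℝ)
    (hx : IsFrontalOn U x) (hΩ : IsTMBOn U x Ω)
    (hxb : IsFrontalOn U xb) (hΩb : IsTMBOn U xb Ωb)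
    (hxeq : ∀ p ∈ U, Jac x p = Ω p * (Λg p)ᵀ ∧ IOm Ω p = IOmg p ∧ IIOm Ω p = IIOmg p)
    (hxbeq : ∀ p ∈ U, Jac xb p = Ωb p * (Λg p)ᵀ ∧ IOm Ωb p = IOmg p ∧
      IIOm Ωb p = IIOmg p) :
    ∃ ρ : Matrix (Fin 3) (Fin 3) ℝ, ρ * ρᵀ = 1 ∧ ρ.det = 1 ∧
      ∃ a : Vec3, (∀ p ∈ U, Ωb p = ρ * Ω p) ∧ (∀ p ∈ U, xb p = ρ *ᵥ x p + a) := by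
  have hpre : IsPreconnected U := hconn.isPreconnected
  obtain ⟨p₀, hp₀⟩ := hconn.nonempty
  have hpos : ∀ p ∈ U, 0 < (IOmg p).det := by
    intro p hp
    have h := hdOm p hp
    rw [Matrix.det_fin_two, hIOsym p hp]
    nlinarith [h]
  have self : Good U IOmg IIOmg Λg x Ω :=
    ⟨hU, hΩ.1, hΛs, hx.1, fun p hp => (hxeq p hp).1, fun p hp => (hxeq p hp).2.1,
     fun p hp => (hxeq p hp).2.2, hpos⟩
  have selfb : Good U IOmg IIOmg Λg xb Ωb :=
    ⟨hU, hΩb.1, hΛs, hxb.1, fun p hp => (hxbeq p hp).1, fun p hp => (hxbeq p hp).2.1,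
     fun p hp => (hxbeq p hp).2.2, hpos⟩
  have hIcd : ∀ p ∈ U, ∀ a b : Fin 2, ContDiffAt ℝ (⊤ : ℕ∞) (fun q => IOmg q a b) p :=
    fun p hp a b => (hIOs a b).contDiffAt (hU.mem_nhds hp)
  -- density of the set where det Λ ≠ 0
  set V : Set Pt := {q ∈ U | (Λg q).det ≠ 0} with hV
  have hdense : ∀ p ∈ U, p ∈ closure V := by
    intro p hp
    by_contra hcl
    rw [mem_closure_iff] at hcl
    push_neg at hcl
    obtain ⟨O, hO, hpO, hOV⟩ := hcl
    have h2 : O ∩ U ⊆ {q ∈ U | (Λg q).det = 0} := by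
      rintro q ⟨hqO, hqU⟩
      refine ⟨hqU, ?_⟩
      by_contra hne
      have hq' : q ∈ O ∩ V := ⟨hqO, hqU, hne⟩
      rw [hOV] at hq'
      exact hq'
    have h3 : p ∈ interior {q ∈ U | (Λg q).det = 0} :=
      interior_maximal h2 (hO.inter hU) ⟨hpO, hp⟩
    rw [hint] at h3
    exact h3
  -- rho is constant on U
  have hrcd : ∀ p ∈ U, ∀ i k : Fin 3, ContDiffAt ℝ (⊤ : ℕ∞) (fun q => rhoF IOmg Ω Ωb q i k) p :=
    fun p hp i k => self.rho_cd selfb hp (hIcd p hp) i k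
  have hpdz : ∀ p ∈ U, ∀ (j : Fin 2) (i k : Fin 3),
      pd j (fun q => rhoF IOmg Ω Ωb q i k) p = 0 := by
    intro p hp j i k
    apply pd_eq_zero_of_dense (fun q hq => hrcd q hq i k) ?_ (hdense p hp) hp
    intro q hq
    have hz := self.pdM_rho_zero selfb hq.1 (hIcd q hq.1) hq.2 j
    have h6 := congrFun (congrFun hz i) k
    simpa [pdM] using h6
  have hconst : ∀ p ∈ U, rhoF IOmg Ω Ωb p = rhoF IOmg Ω Ωb p₀ := by
    intro p hp
    ext i k
    exact const_on_of_pd_zero hU hpre (fun q hq => hrcd q hq i k)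
      (fun q hq j => hpdz q hq j i k) hp₀ hp
  set ρ : Matrix (Fin 3) (Fin 3) ℝ := rhoF IOmg Ω Ωb p₀ with hρ
  have hOmb : ∀ p ∈ U, Ωb p = ρ * Ω p := by
    intro p hp
    have hBeq := self.rho_mul_B selfb hp
    rw [hconst p hp] at hBeq
    ext i k
    fin_cases k
    · exact (congrFun (congrFun hBeq i) 0).symm
    · exact (congrFun (congrFun hBeq i) 1).symm
  -- the translation part
  have hxcd : ∀ p ∈ U, ∀ i : Fin 3, ContDiffAt ℝ (⊤ : ℕ∞) (fun q => x q i) p :=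
    fun p hp i => contDiffAt_pi.mp (hx.1.contDiffAt (hU.mem_nhds hp)) i
  have hxbcd : ∀ p ∈ U, ∀ i : Fin 3, ContDiffAt ℝ (⊤ : ℕ∞) (fun q => xb q i) p :=
    fun p hp i => contDiffAt_pi.mp (hxb.1.contDiffAt (hU.mem_nhds hp)) i
  have hycd : ∀ p ∈ U, ∀ i : Fin 3,
      ContDiffAt ℝ (⊤ : ℕ∞) (fun q => xb q i - ∑ r, ρ i r * x q r) p :=
    fun p hp i => (hxbcd p hp i).sub
      (ContDiffAt.sum fun r _ => contDiffAt_const.mul (hxcd p hp r))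
  have hypd : ∀ p ∈ U, ∀ (i : Fin 3) (j : Fin 2),
      pd j (fun q => xb q i - ∑ r, ρ i r * x q r) p = 0 := by
    intro p hp i j
    have hxd : ∀ r, DifferentiableAt ℝ (fun q => x q r) p :=
      fun r => (hxcd p hp r).differentiableAt (by simp)
    have hxbd : DifferentiableAt ℝ (fun q => xb q i) p :=
      (hxbcd p hp i).differentiableAt (by simp)
    rw [pd_sub hxbd (DifferentiableAt.fun_sum fun r _ => (hxd r).const_mul _),
      pd_sum _ (fun r _ => (hxd r).const_mul _)]
    have e1 : pd j (fun q => xb q i) p = (Ωb p * (Λg p)ᵀ) i j := by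
      have h7 : pd j (fun q => xb q i) p = Jac xb p i j := rfl
      rw [h7, (hxbeq p hp).1]
    have e2 : ∀ r, pd j (fun q => ρ i r * x q r) p = ρ i r * (Ω p * (Λg p)ᵀ) r j := by
      intro r
      rw [pd_cmul _ (hxd r)]
      congr 1
      have h7 : pd j (fun q => x q r) p = Jac x p r j := rfl
      rw [h7, (hxeq p hp).1]
    rw [e1, Finset.sum_congr rfl fun r _ => e2 r]
    have e3 : (Ωb p * (Λg p)ᵀ) i j = ∑ r, ρ i r * (Ω p * (Λg p)ᵀ) r j := by
      rw [hOmb p hp, Matrix.mul_assoc, Matrix.mul_apply]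
    rw [e3, sub_self]
  have ha : ∀ p ∈ U, ∀ i : Fin 3, xb p i - ∑ r, ρ i r * x p r
      = xb p₀ i - ∑ r, ρ i r * x p₀ r :=
    fun p hp i => const_on_of_pd_zero hU hpre (fun q hq => hycd q hq i)
      (fun q hq j => hypd q hq i j) hp₀ hp
  refine ⟨ρ, mul_eq_one_comm.mpr (self.rho_orth selfb hp₀),
    self.rho_det selfb hp₀,
    (fun i => xb p₀ i - ∑ r, ρ i r * x p₀ r), hOmb, ?_⟩
  intro p hp
  funext i
  have h8 := ha p hp i
  simp only [Pi.add_apply, Matrix.mulVec, dotProduct]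
  linarith [h8]
end
end

section
/- Let x : U → ℝ³ be a frontal and Ω an orthonormal tangent moving base of x. Then the first and second fundamental form matrices decompose as Dxᵀ·Dx = Λ·Λᵀ and −Dxᵀ·Dn = Λ·II_Ω, with rank Dx = rank Λ at every point, Σ(x) = λ_Ω⁻¹(0), and the functions (Λ₍₁₎·Λ₍₁₎ᵀ)_v − 2·Λ₍₁₎·Λ₍₂₎uᵀ and 2·Λ₍₁₎v·Λ₍₂₎ᵀ − (Λ₍₂₎·Λ₍₂₎ᵀ)_u belong to the principal ideal 𝔗_Ω generated by λ_Ω in C^∞(U,ℝ), where Λ₍ᵢ₎ denotes the i-th row of Λ. -/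
open Matrix Filter

noncomputable section

section AuxLemmas

lemma pd_congr {E : Type*} [NormedAddCommGroup E] [NormedSpace ℝ E]
    {f g : Pt → E} {p : Pt} (h : f =ᶠ[nhds p] g) (j : Fin 2) : pd j f p = pd j g p := by
  unfold pd; rw [h.fderiv_eq]

lemma pd_const {E : Type*} [NormedAddCommGroup E] [NormedSpace ℝ E]
    (c : E) (j : Fin 2) (p : Pt) : pd j (fun _ => c) p = 0 := by
  unfold pd; rw [fderiv_fun_const]; simp

lemma contDiffOn_pd {E : Type*} [NormedAddCommGroup E] [NormedSpace ℝ E] {U : Set Pt}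
    (hU : IsOpen U) {f : Pt → E} (hf : ContDiffOn ℝ (⊤ : ℕ∞) f U) (j : Fin 2) :
    ContDiffOn ℝ (⊤ : ℕ∞) (fun p => pd j f p) U := by
  have h1 : ContDiffOn ℝ (⊤ : ℕ∞) (fun p => fderiv ℝ f p) U :=
    hf.fderiv_of_isOpen hU (by simp)
  exact (ContinuousLinearMap.apply ℝ E (pdir j)).contDiff.comp_contDiffOn h1

lemma pd_mul {f g : Pt → ℝ} {p : Pt} (hf : DifferentiableAt ℝ f p)
    (hg : DifferentiableAt ℝ g p) (j : Fin 2) :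
    pd j (fun q => f q * g q) p = pd j f p * g p + f p * pd j g p := by
  unfold pd
  rw [fderiv_fun_mul hf hg]
  simp [ContinuousLinearMap.add_apply, ContinuousLinearMap.smul_apply, smul_eq_mul]
  ring

lemma pd_finsum {ι : Type*} (s : Finset ι) (f : ι → Pt → ℝ) {p : Pt}
    (hf : ∀ i ∈ s, DifferentiableAt ℝ (f i) p) (j : Fin 2) :
    pd j (fun q => ∑ i ∈ s, f i q) p = ∑ i ∈ s, pd j (f i) p := by
  unfold pd
  rw [fderiv_fun_sum hf]
  simp

lemma diffAt_of_contDiffOn {U : Set Pt} (hU : IsOpen U) {f : Pt → ℝ} {p : Pt}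
    (hf : ContDiffOn ℝ (⊤ : ℕ∞) f U) (hp : p ∈ U) : DifferentiableAt ℝ f p :=
  ((hf p hp).contDiffAt (hU.mem_nhds hp)).differentiableAt (by simp)

lemma pd_comm {f : Pt → ℝ} {p : Pt} (hf : ContDiffAt ℝ (⊤ : ℕ∞) f p) :
    pd 1 (pd 0 f) p = pd 0 (pd 1 f) p := by
  have hsymm : IsSymmSndFDerivAt ℝ f p := hf.isSymmSndFDerivAt (by rw [minSmoothness_of_isRCLikeNormedField]; exact WithTop.coe_le_coe.mpr le_top)
  have hd : DifferentiableAt ℝ (fderiv ℝ f) p :=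
    (hf.fderiv_right (m := 1) (by exact WithTop.coe_le_coe.mpr le_top)).differentiableAt one_ne_zero
  have key : ∀ v w : Pt, fderiv ℝ (fun q => fderiv ℝ f q v) p w
      = fderiv ℝ (fderiv ℝ f) p w v := by
    intro v w
    rw [fderiv_clm_apply hd (differentiableAt_const v)]
    simp
  unfold pd
  rw [key, key, hsymm]

lemma rank_lt_two_iff_det_eq_zero (A : Matrix (Fin 2) (Fin 2) ℝ) :
    A.rank < 2 ↔ A.det = 0 := by
  constructor
  · intro h
    by_contra hdet
    have : A.rank = 2 := by
      have := Matrix.rank_of_isUnit A (A.isUnit_iff_isUnit_det.mpr (isUnit_iff_ne_zero.mpr hdet))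
      simpa using this
    omega
  · intro hdet
    obtain ⟨v, hv0, hv⟩ := Matrix.exists_mulVec_eq_zero_iff.mpr hdet
    have hker : 0 < Module.finrank ℝ (LinearMap.ker A.mulVecLin) := by
      rw [Module.finrank_pos_iff]
      exact nontrivial_of_ne ⟨v, by simpa [Matrix.mulVecLin] using hv⟩ 0
        (by simp [ne_eq, Submodule.mk_eq_zero, hv0])
    have hrn := LinearMap.finrank_range_add_finrank_ker A.mulVecLin
    have : Module.finrank ℝ (Fin 2 → ℝ) = 2 := by simp
    rw [this] at hrn
    have hr : A.rank = Module.finrank ℝ (LinearMap.range A.mulVecLin) := rfl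
    omega

end AuxLemmas

/-- decomposition of the fundamental forms of a frontal with an
orthonormal tangent moving base. -/
theorem frontal_fundamental_form_decomposition_orthonormal
    (U : Set Pt) (hU : IsOpen U) (x : Pt → Vec3) (Ω : Pt → Matrix (Fin 3) (Fin 2) ℝ)
    (hx : IsFrontalOn U x) (hΩ : IsTMBOn U x Ω)
    (horth : ∀ p ∈ U, ((Ω p)ᵀ 0) ⬝ᵥ ((Ω p)ᵀ 0) = 1 ∧ ((Ω p)ᵀ 1) ⬝ᵥ ((Ω p)ᵀ 1) = 1 ∧
      ((Ω p)ᵀ 0) ⬝ᵥ ((Ω p)ᵀ 1) = 0) :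
    (∀ p ∈ U, (Jac x p)ᵀ * Jac x p = Lam x Ω p * (Lam x Ω p)ᵀ) ∧
    (∀ p ∈ U, -((Jac x p)ᵀ * Jac (nor Ω) p) = Lam x Ω p * IIOm Ω p) ∧
    (∀ p ∈ U, (Jac x p).rank = (Lam x Ω p).rank) ∧
    (Sing U x = {p ∈ U | lamOm x Ω p = 0}) ∧
    (∃ h : Pt → ℝ, ContDiffOn ℝ (⊤ : ℕ∞) h U ∧ ∀ p ∈ U,
      pd 1 (fun q => Lam x Ω q 0 ⬝ᵥ Lam x Ω q 0) p
        - 2 * (Lam x Ω p 0 ⬝ᵥ fun k => pd 0 (fun q => Lam x Ω q 1 k) p)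
        = h p * lamOm x Ω p) ∧
    (∃ h : Pt → ℝ, ContDiffOn ℝ (⊤ : ℕ∞) h U ∧ ∀ p ∈ U,
      2 * ((fun k => pd 1 (fun q => Lam x Ω q 0 k) p) ⬝ᵥ Lam x Ω p 1)
        - pd 0 (fun q => Lam x Ω q 1 ⬝ᵥ Lam x Ω q 1) p
        = h p * lamOm x Ω p) := by
  obtain ⟨hxs, -⟩ := hx
  obtain ⟨hΩs, hΩ2⟩ := hΩ
  have hXs : ∀ i : Fin 3, ContDiffOn ℝ (⊤ : ℕ∞) (fun q => x q i) U := contDiffOn_pi.mp hxs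
  -- Gram identities
  have hG : ∀ p ∈ U, ∀ m k : Fin 2, (∑ l, Ω p l m * Ω p l k) = if m = k then (1:ℝ) else 0 := by
    intro p hp m k
    obtain ⟨h0, h1, h01⟩ := horth p hp
    simp only [dotProduct, Matrix.transpose_apply, Fin.sum_univ_three] at h0 h1 h01
    fin_cases m <;> fin_cases k <;> simp only [Fin.sum_univ_three] <;> norm_num <;>
      first
        | linear_combination h0
        | linear_combination h1
        | linear_combination h01
  -- IOm = 1
  have hIOm : ∀ p ∈ U, IOm Ω p = 1 := by
    intro p hp
    ext m k
    have := hG p hp m k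
    simp only [IOm, Matrix.mul_apply, Matrix.transpose_apply, Matrix.one_apply]
    rw [← this]
  have hLam : ∀ p ∈ U, Lam x Ω p = (Jac x p)ᵀ * Ω p := by
    intro p hp
    rw [Lam, hIOm p hp, inv_one, Matrix.mul_one]
  have hLamE : ∀ p ∈ U, ∀ (j k : Fin 2),
      Lam x Ω p j k = ∑ i : Fin 3, pd j (fun q => x q i) p * Ω p i k := by
    intro p hp j k
    rw [hLam p hp]
    simp [Matrix.mul_apply, Jac]
  -- entrywise decomposition Dx = Ω Λᵀ
  have hXD : ∀ p ∈ U, ∀ (i : Fin 3) (j : Fin 2),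
      pd j (fun q => x q i) p = ∑ k : Fin 2, Ω p i k * Lam x Ω p j k := by
    intro p hp i j
    obtain ⟨c, hc⟩ := Submodule.mem_span_range_iff_exists_fun ℝ |>.mp ((hΩ2 p hp).2 j)
    have hv : ∀ i' : Fin 3, c 0 * Ω p i' 0 + c 1 * Ω p i' 1 = pd j (fun q => x q i') p := by
      intro i'
      have := congrFun hc i'
      simpa [Fin.sum_univ_two, Jac] using this
    have key : ∀ k : Fin 2, Lam x Ω p j k = c k := by
      intro k
      rw [hLamE p hp]
      have g0 := hG p hp 0 k
      have g1 := hG p hp 1 k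
      simp only [Fin.sum_univ_three] at g0 g1 ⊢
      fin_cases k <;> norm_num at g0 g1 ⊢
      · linear_combination (Ω p 0 0) * (hv 0).symm + (Ω p 1 0) * (hv 1).symm
          + (Ω p 2 0) * (hv 2).symm + c 0 * g0 + c 1 * g1
      · linear_combination (Ω p 0 1) * (hv 0).symm + (Ω p 1 1) * (hv 1).symm
          + (Ω p 2 1) * (hv 2).symm + c 0 * g0 + c 1 * g1
    rw [Fin.sum_univ_two, key 0, key 1]
    linear_combination -hv i
  have hDecompM : ∀ p ∈ U, Jac x p = Ω p * (Lam x Ω p)ᵀ := by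
    intro p hp
    ext i j
    have := hXD p hp i j
    simpa [Jac, Matrix.mul_apply] using this
  have hOO : ∀ p ∈ U, (Ω p)ᵀ * Ω p = 1 := fun p hp => hIOm p hp
  -- conjunct 1
  have c1 : ∀ p ∈ U, (Jac x p)ᵀ * Jac x p = Lam x Ω p * (Lam x Ω p)ᵀ := by
    intro p hp
    rw [hDecompM p hp, Matrix.transpose_mul, Matrix.transpose_transpose,
      Matrix.mul_assoc, ← Matrix.mul_assoc (Ω p)ᵀ, hOO p hp, Matrix.one_mul]
  -- conjunct 2
  have c2 : ∀ p ∈ U, -((Jac x p)ᵀ * Jac (nor Ω) p) = Lam x Ω p * IIOm Ω p := by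
    intro p hp
    rw [hDecompM p hp, Matrix.transpose_mul, Matrix.transpose_transpose, IIOm,
      Matrix.mul_assoc, ← Matrix.mul_neg]
  -- conjunct 3
  have c3 : ∀ p ∈ U, (Jac x p).rank = (Lam x Ω p).rank := by
    intro p hp
    refine le_antisymm ?_ ?_
    · rw [hDecompM p hp]
      exact le_trans (Matrix.rank_mul_le_right _ _) (le_of_eq (Matrix.rank_transpose _))
    · rw [hLam p hp]
      exact le_trans (Matrix.rank_mul_le_left _ _) (le_of_eq (Matrix.rank_transpose _))
  -- conjunct 4
  have c4 : Sing U x = {p ∈ U | lamOm x Ω p = 0} := by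
    ext p
    simp only [Sing, Set.mem_setOf_eq, lamOm]
    constructor
    · rintro ⟨hp, hr⟩
      refine ⟨hp, ?_⟩
      rw [← rank_lt_two_iff_det_eq_zero, ← c3 p hp]
      exact hr
    · rintro ⟨hp, hd⟩
      refine ⟨hp, ?_⟩
      rw [c3 p hp, rank_lt_two_iff_det_eq_zero]
      exact hd

  -- smoothness of the entries of Λ
  have hLsm : ∀ (j k : Fin 2), ContDiffOn ℝ (⊤ : ℕ∞) (fun q => Lam x Ω q j k) U := by
    intro j k
    have hs : ContDiffOn ℝ (⊤ : ℕ∞) (fun q => ∑ i : Fin 3, pd j (fun q' => x q' i) q * Ω q i k) U := by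
      apply ContDiffOn.sum
      intro i _
      exact (contDiffOn_pd hU (hXs i) j).mul (hΩs i k)
    exact hs.congr fun q hq => (hLamE q hq j k)
  have hLd : ∀ (j k : Fin 2), ∀ p ∈ U, DifferentiableAt ℝ (fun q => Lam x Ω q j k) p :=
    fun j k p hp => diffAt_of_contDiffOn hU (hLsm j k) hp
  have hOd : ∀ (i : Fin 3) (k : Fin 2), ∀ p ∈ U, DifferentiableAt ℝ (fun q => Ω q i k) p :=
    fun i k p hp => diffAt_of_contDiffOn hU (hΩs i k) hp
  -- derivative of the orthonormality relations
  have hE3 : ∀ p ∈ U, ∀ (j m k : Fin 2),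
      ∑ l : Fin 3, (pd j (fun q => Ω q l m) p * Ω p l k
        + Ω p l m * pd j (fun q => Ω q l k) p) = 0 := by
    intro p hp j m k
    have heq : (fun q => ∑ l : Fin 3, Ω q l m * Ω q l k) =ᶠ[nhds p]
        (fun _ => if m = k then (1:ℝ) else 0) := by
      filter_upwards [hU.mem_nhds hp] with q hq using hG q hq m k
    have h0 : pd j (fun q => ∑ l : Fin 3, Ω q l m * Ω q l k) p = 0 := by
      rw [pd_congr heq j, pd_const]
    rw [pd_finsum Finset.univ (fun l q => Ω q l m * Ω q l k)
      (fun l _ => ((hOd l m p hp).mul (hOd l k p hp))) j] at h0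
    rw [← h0]
    exact (Finset.sum_congr rfl fun l _ => pd_mul (hOd l m p hp) (hOd l k p hp) j).symm
  -- symmetry of second derivatives of x, expressed through Ω and Λ
  have hE1 : ∀ p ∈ U, ∀ i : Fin 3,
      ∑ k : Fin 2, (pd 1 (fun q => Ω q i k) p * Lam x Ω p 0 k
          + Ω p i k * pd 1 (fun q => Lam x Ω q 0 k) p)
      = ∑ k : Fin 2, (pd 0 (fun q => Ω q i k) p * Lam x Ω p 1 k
          + Ω p i k * pd 0 (fun q => Lam x Ω q 1 k) p) := by
    intro p hp i
    have hXc : ContDiffAt ℝ (⊤ : ℕ∞) (fun q => x q i) p := ((hXs i) p hp).contDiffAt (hU.mem_nhds hp)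
    have key : ∀ j j' : Fin 2, pd j' (pd j (fun q => x q i)) p
        = ∑ k : Fin 2, (pd j' (fun q => Ω q i k) p * Lam x Ω p j k
            + Ω p i k * pd j' (fun q => Lam x Ω q j k) p) := by
      intro j j'
      have heq : (pd j (fun q => x q i)) =ᶠ[nhds p]
          (fun q => ∑ k : Fin 2, Ω q i k * Lam x Ω q j k) := by
        filter_upwards [hU.mem_nhds hp] with q hq using hXD q hq i j
      rw [pd_congr heq j', pd_finsum Finset.univ (fun k q => Ω q i k * Lam x Ω q j k)
        (fun k _ => (hOd i k p hp).mul (hLd j k p hp)) j']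
      exact Finset.sum_congr rfl fun k _ => pd_mul (hOd i k p hp) (hLd j k p hp) j'
    calc ∑ k : Fin 2, (pd 1 (fun q => Ω q i k) p * Lam x Ω p 0 k
          + Ω p i k * pd 1 (fun q => Lam x Ω q 0 k) p)
        = pd 1 (pd 0 (fun q => x q i)) p := (key 0 1).symm
      _ = pd 0 (pd 1 (fun q => x q i)) p := pd_comm hXc
      _ = _ := key 1 0
  refine ⟨c1, c2, c3, c4, ?_, ?_⟩
  · -- fifth conjunct
    refine ⟨fun p => 2 * ∑ i : Fin 3, Ω p i 0 * pd 0 (fun q => Ω q i 1) p, ?_, ?_⟩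
    · exact contDiffOn_const.mul (ContDiffOn.sum fun i _ =>
        (hΩs i 0).mul (contDiffOn_pd hU (hΩs i 1) 0))
    · intro p hp
      have hdot : (fun q => Lam x Ω q 0 ⬝ᵥ Lam x Ω q 0)
          = fun q => ∑ k : Fin 2, Lam x Ω q 0 k * Lam x Ω q 0 k := rfl
      rw [hdot, pd_finsum Finset.univ (fun k q => Lam x Ω q 0 k * Lam x Ω q 0 k)
        (fun k _ => (hLd 0 k p hp).mul (hLd 0 k p hp)) 1]
      have hm0 : pd 1 (fun q => Lam x Ω q 0 0 * Lam x Ω q 0 0) p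
          = pd 1 (fun q => Lam x Ω q 0 0) p * Lam x Ω p 0 0
            + Lam x Ω p 0 0 * pd 1 (fun q => Lam x Ω q 0 0) p :=
        pd_mul (hLd 0 0 p hp) (hLd 0 0 p hp) 1
      have hm1 : pd 1 (fun q => Lam x Ω q 0 1 * Lam x Ω q 0 1) p
          = pd 1 (fun q => Lam x Ω q 0 1) p * Lam x Ω p 0 1
            + Lam x Ω p 0 1 * pd 1 (fun q => Lam x Ω q 0 1) p :=
        pd_mul (hLd 0 1 p hp) (hLd 0 1 p hp) 1
      have e10 := hE1 p hp 0
      have e11 := hE1 p hp 1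
      have e12 := hE1 p hp 2
      have g00 := hG p hp 0 0
      have g01 := hG p hp 0 1
      have g11 := hG p hp 1 1
      have t300 := hE3 p hp 0 0 0
      have t301 := hE3 p hp 0 0 1
      have t311 := hE3 p hp 0 1 1
      have t400 := hE3 p hp 1 0 0
      have t401 := hE3 p hp 1 0 1
      have t411 := hE3 p hp 1 1 1
      simp only [Fin.sum_univ_two, Fin.sum_univ_three, dotProduct, lamOm,
        Matrix.det_fin_two] at e10 e11 e12 g00 g01 g11 t300 t301 t311 t400 t401 t411 ⊢
      norm_num at g00 g01 g11
      set L00 := Lam x Ω p 0 0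
      set L01 := Lam x Ω p 0 1
      set L10 := Lam x Ω p 1 0
      set L11 := Lam x Ω p 1 1
      linear_combination hm0 + hm1
        + 2*(L00*Ω p 0 0 + L01*Ω p 0 1) * e10
        + 2*(L00*Ω p 1 0 + L01*Ω p 1 1) * e11
        + 2*(L00*Ω p 2 0 + L01*Ω p 2 1) * e12
        - 2*(L00*(pd 1 (fun q => Lam x Ω q 0 0) p - pd 0 (fun q => Lam x Ω q 1 0) p)) * g00 - 2*(L00*(pd 1 (fun q => Lam x Ω q 0 1) p - pd 0 (fun q => Lam x Ω q 1 1) p) + L01*(pd 1 (fun q => Lam x Ω q 0 0) p - pd 0 (fun q => Lam x Ω q 1 0) p)) * g01 - 2*(L01*(pd 1 (fun q => Lam x Ω q 0 1) p - pd 0 (fun q => Lam x Ω q 1 1) p)) * g11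
        + (L00*L10) * t300 + 2*(L01*L10) * t301 + (L01*L11) * t311
        - (L00*L00) * t400 - 2*(L00*L01) * t401 - (L01*L01) * t411
  · -- sixth conjunct
    refine ⟨fun p => 2 * ∑ i : Fin 3, Ω p i 0 * pd 1 (fun q => Ω q i 1) p, ?_, ?_⟩
    · exact contDiffOn_const.mul (ContDiffOn.sum fun i _ =>
        (hΩs i 0).mul (contDiffOn_pd hU (hΩs i 1) 1))
    · intro p hp
      have hdot : (fun q => Lam x Ω q 1 ⬝ᵥ Lam x Ω q 1)
          = fun q => ∑ k : Fin 2, Lam x Ω q 1 k * Lam x Ω q 1 k := rfl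
      rw [hdot, pd_finsum Finset.univ (fun k q => Lam x Ω q 1 k * Lam x Ω q 1 k)
        (fun k _ => (hLd 1 k p hp).mul (hLd 1 k p hp)) 0]
      have hm0 : pd 0 (fun q => Lam x Ω q 1 0 * Lam x Ω q 1 0) p
          = pd 0 (fun q => Lam x Ω q 1 0) p * Lam x Ω p 1 0
            + Lam x Ω p 1 0 * pd 0 (fun q => Lam x Ω q 1 0) p :=
        pd_mul (hLd 1 0 p hp) (hLd 1 0 p hp) 0
      have hm1 : pd 0 (fun q => Lam x Ω q 1 1 * Lam x Ω q 1 1) p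
          = pd 0 (fun q => Lam x Ω q 1 1) p * Lam x Ω p 1 1
            + Lam x Ω p 1 1 * pd 0 (fun q => Lam x Ω q 1 1) p :=
        pd_mul (hLd 1 1 p hp) (hLd 1 1 p hp) 0
      have e10 := hE1 p hp 0
      have e11 := hE1 p hp 1
      have e12 := hE1 p hp 2
      have g00 := hG p hp 0 0
      have g01 := hG p hp 0 1
      have g11 := hG p hp 1 1
      have t300 := hE3 p hp 0 0 0
      have t301 := hE3 p hp 0 0 1
      have t311 := hE3 p hp 0 1 1
      have t400 := hE3 p hp 1 0 0
      have t401 := hE3 p hp 1 0 1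
      have t411 := hE3 p hp 1 1 1
      simp only [Fin.sum_univ_two, Fin.sum_univ_three, dotProduct, lamOm,
        Matrix.det_fin_two] at e10 e11 e12 g00 g01 g11 t300 t301 t311 t400 t401 t411 ⊢
      norm_num at g00 g01 g11
      set L00 := Lam x Ω p 0 0
      set L01 := Lam x Ω p 0 1
      set L10 := Lam x Ω p 1 0
      set L11 := Lam x Ω p 1 1
      linear_combination (-1 : ℝ)*hm0 - hm1
        + 2*(L10*Ω p 0 0 + L11*Ω p 0 1) * e10
        + 2*(L10*Ω p 1 0 + L11*Ω p 1 1) * e11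
        + 2*(L10*Ω p 2 0 + L11*Ω p 2 1) * e12
        - 2*(L10*(pd 1 (fun q => Lam x Ω q 0 0) p - pd 0 (fun q => Lam x Ω q 1 0) p)) * g00 - 2*(L10*(pd 1 (fun q => Lam x Ω q 0 1) p - pd 0 (fun q => Lam x Ω q 1 1) p) + L11*(pd 1 (fun q => Lam x Ω q 0 0) p - pd 0 (fun q => Lam x Ω q 1 0) p)) * g01 - 2*(L11*(pd 1 (fun q => Lam x Ω q 0 1) p - pd 0 (fun q => Lam x Ω q 1 1) p)) * g11
        + (L10*L10) * t300 + 2*(L10*L11) * t301 + (L11*L11) * t311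
        - (L10*L00) * t400 - 2*(L11*L00) * t401 - (L11*L01) * t411
end
end

section
/- Let x : U → ℝ³ be a smooth map on an open set U ⊆ ℝ². Then x is a frontal if and only if for every p ∈ U there exist an open neighborhood V_p ⊆ U of p and a tangent moving base Ω : V_p → M_{3×2}(ℝ) of x restricted to V_p. -/
open Matrix Filter

noncomputable section

section AuxFrontal

lemma fin3_cases' (a b : Fin 3) : b = a ∨ b = a + 1 ∨ b = a + 2 := by
  revert a b; decide

lemma fin3_h1i (i : Fin 3) : ¬ (i + 1 = i) := by revert i; decide
lemma fin3_h2i (i : Fin 3) : ¬ (i + 2 = i) := by revert i; decide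
lemma fin3_h21 (i : Fin 3) : ¬ (i + 2 = i + 1) := by revert i; decide
lemma fin3_h12 (i : Fin 3) : ¬ (i + 1 = i + 2) := by revert i; decide

lemma sum3 (i : Fin 3) (f : Fin 3 → ℝ) : (∑ k, f k) = f i + f (i+1) + f (i+2) := by
  fin_cases i <;> simp [Fin.sum_univ_three] <;> ring

lemma tmb_exists (V : Set Pt) (x ν : Pt → Vec3)
    (hν : ContDiffOn ℝ (⊤ : ℕ∞) ν V) (i : Fin 3) (hi : ∀ q ∈ V, ν q i ≠ 0)
    (horth : ∀ q ∈ V, ∀ j : Fin 2, ν q ⬝ᵥ (Jac x q)ᵀ j = 0) :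
    ∃ Ω : Pt → Matrix (Fin 3) (Fin 2) ℝ, IsTMBOn V x Ω := by
  have h1i := fin3_h1i i
  have h2i := fin3_h2i i
  have h21 := fin3_h21 i
  have h12 := fin3_h12 i
  have hcomp : ∀ k, ContDiffOn ℝ (⊤ : ℕ∞) (fun q => ν q k) V := fun k => contDiffOn_pi.1 hν k
  refine ⟨fun q => Matrix.of fun r c =>
      if c = 0 then (if r = i then -(ν q (i+2)) else if r = i+2 then ν q i else 0)
      else (if r = i then ν q (i+1) else if r = i+1 then -(ν q i) else 0), ?_, ?_⟩
  · intro r c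
    fin_cases c
    · simp only [Matrix.of_apply, if_pos rfl]
      by_cases h1 : r = i
      · simp only [if_pos h1]; exact (hcomp (i+2)).neg
      · by_cases h2 : r = i + 2
        · simp only [if_neg h1, if_pos h2]; exact hcomp i
        · simp only [if_neg h1, if_neg h2]; exact contDiffOn_const
    · have : ¬ ((1 : Fin 2) = 0) := by decide
      simp only [Matrix.of_apply, if_neg this]
      by_cases h1 : r = i
      · simp only [if_pos h1]; exact hcomp (i+1)
      · by_cases h2 : r = i + 1
        · simp only [if_neg h1, if_pos h2]; exact (hcomp i).neg
        · simp only [if_neg h1, if_neg h2]; exact contDiffOn_const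
  · intro p hp
    constructor
    · rw [Fintype.linearIndependent_iff]
      intro g hg
      have h2 := congrFun hg (i+2)
      have h1 := congrFun hg (i+1)
      simp only [Fin.sum_univ_two, Pi.add_apply, Pi.smul_apply, Matrix.transpose_apply,
        Matrix.of_apply, smul_eq_mul, Pi.zero_apply, h1i, h2i, h21, if_false, if_true,
        if_pos rfl, h12, Fin.one_eq_zero_iff, OfNat.ofNat_ne_one, mul_zero, add_zero, zero_add,
        mul_neg, neg_eq_zero] at h2 h1
      have hg0 : g 0 = 0 := by
        rcases mul_eq_zero.mp h2 with h | h
        · exact h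
        · exact absurd h (hi p hp)
      have hg1 : g 1 = 0 := by
        rcases mul_eq_zero.mp h1 with h | h
        · exact h
        · exact absurd h (hi p hp)
      intro j; fin_cases j <;> assumption
    · intro j
      rw [Submodule.mem_span_range_iff_exists_fun]
      set t : Vec3 := (Jac x p)ᵀ j with ht
      refine ⟨![t (i+2) / ν p i, -(t (i+1)) / ν p i], ?_⟩
      have hd := horth p hp j
      have hsum : ν p i * t i + ν p (i+1) * t (i+1) + ν p (i+2) * t (i+2) = 0 := by
        rw [← sum3 i (fun k => ν p k * t k)]
        exact hd
      have hnz := hi p hp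
      funext r
      rcases fin3_cases' i r with hr | hr | hr <;> rw [hr] <;>
        simp only [Fin.sum_univ_two, Pi.add_apply, Pi.smul_apply, Matrix.transpose_apply,
          Matrix.of_apply, smul_eq_mul, h1i, h2i, h21, h12, if_false, if_pos rfl,
          Matrix.cons_val_zero, Matrix.cons_val_one, Matrix.head_cons, ite_true, ite_false,
          Ne.symm h1i, Ne.symm h2i, Fin.one_eq_zero_iff, OfNat.ofNat_ne_one, mul_zero, neg_zero,
          add_zero, zero_add] <;>
        field_simp
      · linear_combination (-1 : ℝ) * hsum

end AuxFrontal

/-- a smooth map is a frontal iff it locally admits a tangent moving base. -/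
theorem frontal_iff_tangent_moving_base
    (U : Set Pt) (hU : IsOpen U) (x : Pt → Vec3) (hx : ContDiffOn ℝ (⊤ : ℕ∞) x U) :
    IsFrontalOn U x ↔
      ∀ p ∈ U, ∃ V : Set Pt, V ⊆ U ∧ IsOpen V ∧ p ∈ V ∧
        ∃ Ω : Pt → Matrix (Fin 3) (Fin 2) ℝ, IsTMBOn V x Ω := by
  constructor
  · rintro ⟨-, hfr⟩ p hp
    obtain ⟨V, hVU, hVo, hpV, ν, hν, hprop⟩ := hfr p hp
    have hν1 : ν p ⬝ᵥ ν p = 1 := (hprop p hpV).1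
    have hex : ∃ i : Fin 3, ν p i ≠ 0 := by
      by_contra h
      push_neg at h
      have : ν p ⬝ᵥ ν p = 0 := by
        simp [dotProduct, Fin.sum_univ_three, h 0, h 1, h 2]
      rw [this] at hν1
      exact zero_ne_one hν1
    obtain ⟨i, hi⟩ := hex
    set V' : Set Pt := V ∩ ((fun q => ν q i) ⁻¹' {0}ᶜ) with hV'
    have hV'o : IsOpen V' := ContinuousOn.isOpen_inter_preimage
      ((contDiffOn_pi.1 hν i).continuousOn) hVo isOpen_compl_singleton
    have hsub : V' ⊆ V := Set.inter_subset_left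
    obtain ⟨Ω, hΩ⟩ := tmb_exists V' x ν (hν.mono hsub) i
      (fun q hq => by simpa using hq.2) (fun q hq j => (hprop q (hsub hq)).2 j)
    exact ⟨V', hsub.trans hVU, hV'o, ⟨hpV, by simpa using hi⟩, Ω, hΩ⟩
  · intro h
    refine ⟨hx, fun p hp => ?_⟩
    obtain ⟨V, hVU, hVo, hpV, Ω, hsm, hprop⟩ := h p hp
    set c : Pt → Vec3 := fun q => crossProduct ((Ω q)ᵀ 0) ((Ω q)ᵀ 1) with hc
    set d : Pt → ℝ := fun q => c q ⬝ᵥ c q with hdd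
    have hcne : ∀ q ∈ V, c q ≠ 0 := by
      intro q hq
      have hli := (hprop q hq).1
      have heq : (fun j : Fin 2 => (Ω q)ᵀ j) = ![(Ω q)ᵀ 0, (Ω q)ᵀ 1] := by
        funext j; fin_cases j <;> rfl
      rw [heq] at hli
      exact crossProduct_ne_zero_iff_linearIndependent.2 hli
    have hd0 : ∀ q ∈ V, 0 < d q := by
      intro q hq
      have hne : d q ≠ 0 := fun hz => hcne q hq (dotProduct_self_eq_zero.mp hz)
      have hnn : 0 ≤ d q := Finset.sum_nonneg fun k _ => mul_self_nonneg _
      exact lt_of_le_of_ne hnn (Ne.symm hne)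
    have hce : ∀ k, ContDiffOn ℝ (⊤ : ℕ∞) (fun q => c q k) V := by
      intro k
      fin_cases k <;>
        simp only [hc, cross_apply, Matrix.transpose_apply, Matrix.cons_val_zero,
          Matrix.cons_val_one, Matrix.head_cons, Matrix.cons_val_two, Matrix.tail_cons] <;>
      · exact ((hsm _ _).mul (hsm _ _)).sub ((hsm _ _).mul (hsm _ _))
    have hdsm : ContDiffOn ℝ (⊤ : ℕ∞) d V := by
      have : d = fun q => c q 0 * c q 0 + c q 1 * c q 1 + c q 2 * c q 2 := by
        funext q; simp [hdd, dotProduct, Fin.sum_univ_three]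
      rw [this]
      exact (((hce 0).mul (hce 0)).add ((hce 1).mul (hce 1))).add ((hce 2).mul (hce 2))
    have hsqrt_ne : ∀ q ∈ V, Real.sqrt (d q) ≠ 0 :=
      fun q hq => Real.sqrt_ne_zero'.2 (hd0 q hq)
    have hinv : ContDiffOn ℝ (⊤ : ℕ∞) (fun q => (Real.sqrt (d q))⁻¹) V :=
      (hdsm.sqrt fun q hq => (hd0 q hq).ne').inv hsqrt_ne
    refine ⟨V, hVU, hVo, hpV, nor Ω, ?_, ?_⟩
    · apply contDiffOn_pi.2
      intro k
      have : (fun q => nor Ω q k) = fun q => (Real.sqrt (d q))⁻¹ * c q k := by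
        funext q; simp [nor, hdd, hc]
      rw [this]
      exact hinv.mul (hce k)
    · intro q hq
      have hss : Real.sqrt (d q) * Real.sqrt (d q) = d q := Real.mul_self_sqrt (hd0 q hq).le
      constructor
      · show nor Ω q ⬝ᵥ nor Ω q = 1
        have : nor Ω q ⬝ᵥ nor Ω q = (Real.sqrt (d q))⁻¹ * ((Real.sqrt (d q))⁻¹ * d q) := by
          simp [nor, smul_dotProduct, dotProduct_smul, smul_eq_mul, hdd, hc]
        rw [this, ← hss]
        have hsne := hsqrt_ne q hq
        field_simp
        rw [Real.sqrt_sq (Real.sqrt_nonneg _)]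
      · intro j
        have ht := (hprop q hq).2 j
        rw [Submodule.mem_span_range_iff_exists_fun] at ht
        obtain ⟨g, hg⟩ := ht
        have h0 : c q ⬝ᵥ (Ω q)ᵀ 0 = 0 := by
          rw [dotProduct_comm]; exact dot_self_cross _ _
        have h1 : c q ⬝ᵥ (Ω q)ᵀ 1 = 0 := by
          rw [dotProduct_comm]; exact dot_cross_self _ _
        rw [← hg]
        simp [nor, Fin.sum_univ_two, smul_dotProduct, dotProduct_add,
          dotProduct_smul, smul_eq_mul, ← hc, h0, h1]
        simp only [dotProduct_comm _ ((Ω q)ᵀ 0), dotProduct_comm _ ((Ω q)ᵀ 1), dot_self_cross,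
          dot_cross_self, mul_zero, add_zero]
end
end

section
/- Let x : U → ℝ³ be a proper frontal and Ω a tangent moving base of x. Let K and H denote the Gaussian curvature and mean curvature of x, defined on the regular set Σ(x)ᶜ by K := det α and H := −(1/2)·tr α, where α := −IIᵀ·I⁻¹ with I := Dxᵀ·Dx and II := −Dxᵀ·Dn. Then: (1) for every p ∈ Σ(x)ᶜ, K_Ω(p) = λ_Ω(p)·K(p) and H_Ω(p) = λ_Ω(p)·H(p); and (2) for every p ∈ Σ(x), K_Ω(p) = lim_{q→p, q∈Σ(x)ᶜ} λ_Ω(q)·K(q) and H_Ω(p) = lim_{q→p, q∈Σ(x)ᶜ} λ_Ω(q)·H(q). -/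
open Matrix Filter

noncomputable section

section MyHelpers

lemma my_gram_det_ne_zero (W : Matrix (Fin 3) (Fin 2) ℝ)
    (h : LinearIndependent ℝ (fun j : Fin 2 => Wᵀ j)) : (Wᵀ * W).det ≠ 0 := by
  intro h0
  obtain ⟨v, hv, hWv⟩ := (Matrix.exists_mulVec_eq_zero_iff).2 h0
  have h1 : v ⬝ᵥ (Wᵀ * W) *ᵥ v = 0 := by rw [hWv, dotProduct_zero]
  rw [← Matrix.mulVec_mulVec, Matrix.dotProduct_mulVec, Matrix.vecMul_transpose,
    dotProduct_self_eq_zero] at h1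
  have h2 : ∑ j : Fin 2, v j • Wᵀ j = 0 := by
    funext i
    have := congrFun h1 i
    simpa [Matrix.mulVec, dotProduct, Finset.sum_apply, mul_comm] using this
  exact hv (funext fun j => Fintype.linearIndependent_iff.1 h v h2 j)

lemma my_rank_lt_two_iff_det_eq_zero (M : Matrix (Fin 2) (Fin 2) ℝ) :
    M.rank < 2 ↔ M.det = 0 := by
  constructor
  · intro h
    by_contra hd
    have := Matrix.rank_of_isUnit M ((Matrix.isUnit_iff_isUnit_det M).2 (isUnit_iff_ne_zero.2 hd))
    simp [this] at h
  · intro hd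
    obtain ⟨v, hv, hMv⟩ := (Matrix.exists_mulVec_eq_zero_iff).2 hd
    have hrn := LinearMap.finrank_range_add_finrank_ker M.mulVecLin
    have hker : 0 < Module.finrank ℝ (LinearMap.ker M.mulVecLin) := by
      rw [Module.finrank_pos_iff]
      refine ⟨⟨⟨v, ?_⟩, 0, by simp [Subtype.ext_iff, hv]⟩⟩
      simp [LinearMap.mem_ker, Matrix.mulVecLin_apply, hMv]
    have hfr : Module.finrank ℝ (Fin 2 → ℝ) = 2 := by simp
    rw [hfr] at hrn
    rw [Matrix.rank]
    omega

lemma my_cross_dot_self_eq_det (W : Matrix (Fin 3) (Fin 2) ℝ) :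
    (crossProduct (Wᵀ 0) (Wᵀ 1)) ⬝ᵥ (crossProduct (Wᵀ 0) (Wᵀ 1)) = (Wᵀ * W).det := by
  simp [cross_apply, dotProduct, Fin.sum_univ_three, Matrix.det_fin_two,
    Matrix.mul_apply, Matrix.transpose_apply]
  ring

lemma my_factor (x : Pt → Vec3) (Ω : Pt → Matrix (Fin 3) (Fin 2) ℝ) (p : Pt)
    (hsp : ∀ j : Fin 2, (Jac x p)ᵀ j ∈
      Submodule.span ℝ (Set.range fun k : Fin 2 => (Ω p)ᵀ k)) :
    ∃ C : Matrix (Fin 2) (Fin 2) ℝ, Jac x p = Ω p * C := by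
  choose c hc using fun j => (Submodule.mem_span_range_iff_exists_fun ℝ).1 (hsp j)
  refine ⟨Matrix.of fun k j => c j k, ?_⟩
  ext i j
  have := congrFun (hc j) i
  simp only [Finset.sum_apply, Pi.smul_apply, Matrix.transpose_apply, smul_eq_mul] at this
  simp [Matrix.mul_apply, ← this, mul_comm]

lemma my_muM_eq (Ω : Pt → Matrix (Fin 3) (Fin 2) ℝ) (p : Pt) :
    muM Ω p = (Jac (nor Ω) p)ᵀ * Ω p * (IOm Ω p)⁻¹ := by
  unfold muM IIOm
  rw [Matrix.transpose_neg, Matrix.transpose_mul, neg_mul, neg_neg, Matrix.transpose_transpose]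


lemma my_alphaM_eq (x : Pt → Vec3) (Ω : Pt → Matrix (Fin 3) (Fin 2) ℝ) (p : Pt) :
    alphaM x Ω p = (Jac (nor Ω) p)ᵀ * Jac x p * ((Jac x p)ᵀ * Jac x p)⁻¹ := by
  unfold alphaM
  rw [Matrix.transpose_neg, Matrix.transpose_mul, neg_mul, neg_neg, Matrix.transpose_transpose]

lemma my_reg_point_eq (x : Pt → Vec3) (Ω : Pt → Matrix (Fin 3) (Fin 2) ℝ) (p : Pt)
    (hli : LinearIndependent ℝ (fun j : Fin 2 => (Ω p)ᵀ j))
    (hsp : ∀ j : Fin 2, (Jac x p)ᵀ j ∈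
      Submodule.span ℝ (Set.range fun k : Fin 2 => (Ω p)ᵀ k))
    (hreg : ¬ (Jac x p).rank < 2) :
    KOm Ω p = lamOm x Ω p * Kgauss x Ω p ∧ HOm x Ω p = lamOm x Ω p * Hmean x Ω p := by
  obtain ⟨C, hC⟩ := my_factor x Ω p hsp
  set A := Jac x p with hA
  set W := Ω p with hW
  set N := Jac (nor Ω) p with hN
  have hG : ((Wᵀ) * W).det ≠ 0 := my_gram_det_ne_zero W hli
  have hGu : IsUnit ((Wᵀ) * W).det := isUnit_iff_ne_zero.2 hG
  have hIOm : IOm Ω p = Wᵀ * W := rfl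
  have hATA : Aᵀ * A = Cᵀ * (Wᵀ * W) * C := by
    rw [hC, Matrix.transpose_mul]
    simp only [Matrix.mul_assoc]
  have hdetATA : (Aᵀ * A).det = C.det ^ 2 * (Wᵀ * W).det := by
    rw [hATA, Matrix.det_mul, Matrix.det_mul, Matrix.det_transpose]
    ring
  have hdC : C.det ≠ 0 := by
    intro h0
    apply hreg
    rw [← Matrix.rank_transpose_mul_self, my_rank_lt_two_iff_det_eq_zero, hdetATA, h0]
    ring
  have hCu : IsUnit C.det := isUnit_iff_ne_zero.2 hdC
  have hCtu : IsUnit (Cᵀ).det := by rwa [Matrix.det_transpose]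
  have hΛ : Lam x Ω p = Cᵀ := by
    unfold Lam
    rw [hIOm, ← hA, ← hW, hC, Matrix.transpose_mul, Matrix.mul_assoc, Matrix.mul_assoc,
      ← Matrix.mul_assoc (Wᵀ), Matrix.mul_nonsing_inv _ hGu, Matrix.mul_one]
  have hμ : muM Ω p = Nᵀ * W * (Wᵀ * W)⁻¹ := by rw [my_muM_eq, hIOm]
  have hα : alphaM x Ω p = muM Ω p * (Cᵀ)⁻¹ := by
    rw [my_alphaM_eq, ← hA, ← hN, hμ, hATA, hC, Matrix.mul_inv_rev, Matrix.mul_inv_rev]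
    simp only [Matrix.mul_assoc]
    rw [Matrix.mul_nonsing_inv_cancel_left _ _ hCu]
  have hdetαinv : ((Cᵀ)⁻¹).det = (C.det)⁻¹ := by
    rw [Matrix.det_nonsing_inv, Ring.inverse_eq_inv', Matrix.det_transpose]
  have hlam : lamOm x Ω p = C.det := by
    rw [lamOm, hΛ, Matrix.det_transpose]
  constructor
  · rw [Kgauss, hα, Matrix.det_mul, hdetαinv, hlam, KOm]
    field_simp
  · have hadj : (Lam x Ω p).adjugate = C.det • (Cᵀ)⁻¹ := by
      rw [hΛ, Matrix.inv_def, Ring.inverse_eq_inv', smul_smul, Matrix.det_transpose,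
        mul_inv_cancel₀ hdC, one_smul]
    rw [HOm, Hmean, hadj, hα, hlam, Matrix.mul_smul, Matrix.trace_smul, smul_eq_mul]
    ring


section MyCont

variable {U : Set Pt}

lemma my_contOn_mul {l m n : ℕ} {A : Pt → Matrix (Fin l) (Fin m) ℝ}
    {B : Pt → Matrix (Fin m) (Fin n) ℝ}
    (hA : ∀ i j, ContinuousOn (fun q => A q i j) U)
    (hB : ∀ i j, ContinuousOn (fun q => B q i j) U) :
    ∀ i j, ContinuousOn (fun q => (A q * B q) i j) U := by
  intro i j
  simp only [Matrix.mul_apply]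
  exact continuousOn_finset_sum _ fun k _ => (hA i k).mul (hB k j)

lemma my_contOn_det2 {A : Pt → Matrix (Fin 2) (Fin 2) ℝ}
    (hA : ∀ i j, ContinuousOn (fun q => A q i j) U) :
    ContinuousOn (fun q => (A q).det) U := by
  simp only [Matrix.det_fin_two]
  exact ((hA 0 0).mul (hA 1 1)).sub ((hA 0 1).mul (hA 1 0))

lemma my_contOn_adj2 {A : Pt → Matrix (Fin 2) (Fin 2) ℝ}
    (hA : ∀ i j, ContinuousOn (fun q => A q i j) U) :
    ∀ i j, ContinuousOn (fun q => (A q).adjugate i j) U := by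
  intro i j
  fin_cases i <;> fin_cases j <;>
    simp only [Matrix.adjugate_fin_two, Matrix.cons_val_zero, Matrix.cons_val_one,
      Matrix.head_cons, Matrix.of_apply, Fin.isValue, Matrix.cons_val', Matrix.empty_val',
      Matrix.cons_val_fin_one, Fin.zero_eta, Fin.mk_one] <;>
    first
      | exact hA 1 1
      | exact (hA 0 1).neg
      | exact (hA 1 0).neg
      | exact hA 0 0

lemma my_contOn_inv2 {A : Pt → Matrix (Fin 2) (Fin 2) ℝ}
    (hA : ∀ i j, ContinuousOn (fun q => A q i j) U)
    (hdet : ∀ q ∈ U, (A q).det ≠ 0) :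
    ∀ i j, ContinuousOn (fun q => (A q)⁻¹ i j) U := by
  intro i j
  have he : ∀ q : Pt, (A q)⁻¹ i j = ((A q).det)⁻¹ * (A q).adjugate i j := by
    intro q
    rw [Matrix.inv_def, Ring.inverse_eq_inv', Matrix.smul_apply, smul_eq_mul]
  simp only [he]
  exact ((my_contOn_det2 hA).inv₀ hdet).mul (my_contOn_adj2 hA i j)

lemma my_jac_entry_contOn {n : ℕ} (hU : IsOpen U) {f : Pt → Fin n → ℝ}
    (hf : ContDiffOn ℝ (⊤ : ℕ∞) f U) :
    ∀ i j, ContinuousOn (fun q => Jac f q i j) U := by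
  intro i j
  have hfi : ContDiffOn ℝ (⊤ : ℕ∞) (fun q => f q i) U := contDiffOn_pi.1 hf i
  have h1 : ContinuousOn (fderiv ℝ fun q => f q i) U :=
    hfi.continuousOn_fderiv_of_isOpen hU (by simp)
  simpa only [Jac, pd, Matrix.of_apply] using h1.clm_apply continuousOn_const

lemma my_nor_contDiffOn (hU : IsOpen U) {Ω : Pt → Matrix (Fin 3) (Fin 2) ℝ}
    (hΩ : SmoothMatOn U Ω)
    (hli : ∀ p ∈ U, LinearIndependent ℝ (fun j : Fin 2 => (Ω p)ᵀ j)) :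
    ContDiffOn ℝ (⊤ : ℕ∞) (nor Ω) U := by
  have hc : ∀ i : Fin 3,
      ContDiffOn ℝ (⊤ : ℕ∞) (fun q => crossProduct ((Ω q)ᵀ 0) ((Ω q)ᵀ 1) i) U := by
    intro i
    fin_cases i <;> simp only [cross_apply, Matrix.transpose_apply, Matrix.cons_val_zero,
      Matrix.cons_val_one, Matrix.head_cons, Fin.isValue, Matrix.cons_val_two,
      Matrix.tail_cons, Fin.zero_eta, Fin.mk_one] <;>
      exact ((hΩ _ _).mul (hΩ _ _)).sub ((hΩ _ _).mul (hΩ _ _))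
  have hd : ContDiffOn ℝ (⊤ : ℕ∞)
      (fun q => (crossProduct ((Ω q)ᵀ 0) ((Ω q)ᵀ 1)) ⬝ᵥ (crossProduct ((Ω q)ᵀ 0) ((Ω q)ᵀ 1))) U := by
    simp only [dotProduct, Fin.sum_univ_three]
    exact (((hc 0).mul (hc 0)).add ((hc 1).mul (hc 1))).add ((hc 2).mul (hc 2))
  have hdpos : ∀ q ∈ U,
      0 < (crossProduct ((Ω q)ᵀ 0) ((Ω q)ᵀ 1)) ⬝ᵥ (crossProduct ((Ω q)ᵀ 0) ((Ω q)ᵀ 1)) := by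
    intro q hq
    have h1 := my_cross_dot_self_eq_det (Ω q)
    have h2 := my_gram_det_ne_zero (Ω q) (hli q hq)
    have h3 : 0 ≤ (crossProduct ((Ω q)ᵀ 0) ((Ω q)ᵀ 1)) ⬝ᵥ (crossProduct ((Ω q)ᵀ 0) ((Ω q)ᵀ 1)) :=
      Finset.sum_nonneg fun k _ => mul_self_nonneg _
    exact lt_of_le_of_ne h3 fun h => h2 (by rw [← h1, ← h])
  rw [contDiffOn_pi]
  intro i
  have he : ∀ q : Pt, nor Ω q i =
      (Real.sqrt ((crossProduct ((Ω q)ᵀ 0) ((Ω q)ᵀ 1)) ⬝ᵥ (crossProduct ((Ω q)ᵀ 0) ((Ω q)ᵀ 1))))⁻¹ *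
        (crossProduct ((Ω q)ᵀ 0) ((Ω q)ᵀ 1)) i := fun q => rfl
  simp only [he]
  intro q hq
  have hdq : ContDiffAt ℝ (⊤ : ℕ∞)
      (fun q' => (crossProduct ((Ω q')ᵀ 0) ((Ω q')ᵀ 1)) ⬝ᵥ (crossProduct ((Ω q')ᵀ 0) ((Ω q')ᵀ 1))) q :=
    (hd q hq).contDiffAt (hU.mem_nhds hq)
  have hs : ContDiffAt ℝ (⊤ : ℕ∞)
      (fun q' => Real.sqrt ((crossProduct ((Ω q')ᵀ 0) ((Ω q')ᵀ 1)) ⬝ᵥ (crossProduct ((Ω q')ᵀ 0) ((Ω q')ᵀ 1)))) q :=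
    (Real.contDiffAt_sqrt (hdpos q hq).ne').comp q hdq
  have hinv := hs.inv (ne_of_gt (Real.sqrt_pos.2 (hdpos q hq)))
  exact (hinv.mul ((hc i q hq).contDiffAt (hU.mem_nhds hq))).contDiffWithinAt

lemma my_KOm_contOn (hU : IsOpen U) {Ω : Pt → Matrix (Fin 3) (Fin 2) ℝ}
    (hΩ : SmoothMatOn U Ω)
    (hli : ∀ p ∈ U, LinearIndependent ℝ (fun j : Fin 2 => (Ω p)ᵀ j)) :
    (∀ i j, ContinuousOn (fun q => muM Ω q i j) U) ∧ ContinuousOn (KOm Ω) U := by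
  have hW : ∀ (i : Fin 3) (j : Fin 2), ContinuousOn (fun q => Ω q i j) U :=
    fun i j => (hΩ i j).continuousOn
  have hN := my_jac_entry_contOn hU (my_nor_contDiffOn hU hΩ hli)
  have hNt : ∀ (i : Fin 2) (j : Fin 3), ContinuousOn (fun q => (Jac (nor Ω) q)ᵀ i j) U :=
    fun i j => hN j i
  have hWt : ∀ (i : Fin 2) (j : Fin 3), ContinuousOn (fun q => (Ω q)ᵀ i j) U :=
    fun i j => hW j i
  have hG : ∀ i j, ContinuousOn (fun q => IOm Ω q i j) U := my_contOn_mul hWt hW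
  have hGdet : ∀ q ∈ U, (IOm Ω q).det ≠ 0 := fun q hq => my_gram_det_ne_zero (Ω q) (hli q hq)
  have hGi := my_contOn_inv2 hG hGdet
  have hμ : ∀ i j, ContinuousOn (fun q => muM Ω q i j) U := by
    intro i j
    have h := my_contOn_mul (my_contOn_mul hNt hW) hGi i j
    simp only [my_muM_eq]
    exact h
  exact ⟨hμ, my_contOn_det2 hμ⟩

lemma my_HOm_contOn (hU : IsOpen U) {x : Pt → Vec3} {Ω : Pt → Matrix (Fin 3) (Fin 2) ℝ}
    (hx : ContDiffOn ℝ (⊤ : ℕ∞) x U) (hΩ : SmoothMatOn U Ω)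
    (hli : ∀ p ∈ U, LinearIndependent ℝ (fun j : Fin 2 => (Ω p)ᵀ j)) :
    ContinuousOn (HOm x Ω) U := by
  have hW : ∀ (i : Fin 3) (j : Fin 2), ContinuousOn (fun q => Ω q i j) U :=
    fun i j => (hΩ i j).continuousOn
  have hWt : ∀ (i : Fin 2) (j : Fin 3), ContinuousOn (fun q => (Ω q)ᵀ i j) U :=
    fun i j => hW j i
  have hG : ∀ i j, ContinuousOn (fun q => IOm Ω q i j) U := my_contOn_mul hWt hW
  have hGdet : ∀ q ∈ U, (IOm Ω q).det ≠ 0 := fun q hq => my_gram_det_ne_zero (Ω q) (hli q hq)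
  have hGi := my_contOn_inv2 hG hGdet
  have hJ := my_jac_entry_contOn hU hx
  have hJt : ∀ (i : Fin 2) (j : Fin 3), ContinuousOn (fun q => (Jac x q)ᵀ i j) U :=
    fun i j => hJ j i
  have hΛ : ∀ i j, ContinuousOn (fun q => Lam x Ω q i j) U :=
    my_contOn_mul (my_contOn_mul hJt hW) hGi
  have hμ := (my_KOm_contOn hU hΩ hli).1
  have hadj := my_contOn_adj2 hΛ
  have hM := my_contOn_mul hμ hadj
  have he : ∀ q : Pt, HOm x Ω q =
      -(1 / 2) * ((muM Ω q * (Lam x Ω q).adjugate) 0 0 + (muM Ω q * (Lam x Ω q).adjugate) 1 1) := by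
    intro q
    rw [HOm, Matrix.trace_fin_two]
  exact (continuousOn_const.mul ((hM 0 0).add (hM 1 1))).congr fun q _ => he q

end MyCont

end MyHelpers
/-- the relative curvatures are `λ_Ω K` and `λ_Ω H` on the regular set
and their limits at singular points. -/
theorem relative_curvatures_vs_curvatures
    (U : Set Pt) (hU : IsOpen U) (x : Pt → Vec3) (Ω : Pt → Matrix (Fin 3) (Fin 2) ℝ)
    (hx : IsFrontalOn U x) (hproper : interior (Sing U x) = ∅)
    (hΩ : IsTMBOn U x Ω) :
    (∀ p ∈ U \ Sing U x,
      KOm Ω p = lamOm x Ω p * Kgauss x Ω p ∧ HOm x Ω p = lamOm x Ω p * Hmean x Ω p) ∧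
    (∀ p ∈ Sing U x,
      Tendsto (fun q => lamOm x Ω q * Kgauss x Ω q) (nhdsWithin p (U \ Sing U x))
        (nhds (KOm Ω p)) ∧
      Tendsto (fun q => lamOm x Ω q * Hmean x Ω q) (nhdsWithin p (U \ Sing U x))
        (nhds (HOm x Ω p))) := by
  obtain ⟨hxs, -⟩ := hx
  obtain ⟨hΩs, hΩp⟩ := hΩ
  have hli : ∀ p ∈ U, LinearIndependent ℝ (fun j : Fin 2 => (Ω p)ᵀ j) :=
    fun p hp => (hΩp p hp).1
  have part1 : ∀ p ∈ U \ Sing U x,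
      KOm Ω p = lamOm x Ω p * Kgauss x Ω p ∧ HOm x Ω p = lamOm x Ω p * Hmean x Ω p := by
    intro p hp
    exact my_reg_point_eq x Ω p (hli p hp.1) (hΩp p hp.1).2 fun hlt => hp.2 ⟨hp.1, hlt⟩
  refine ⟨part1, fun p hp => ?_⟩
  have hpU : p ∈ U := hp.1
  have hKc := (my_KOm_contOn hU hΩs hli).2
  have hHc := my_HOm_contOn hU hxs hΩs hli
  have hsub : U \ Sing U x ⊆ U := Set.diff_subset
  constructor
  · refine Tendsto.congr' ?_ (((hKc p hpU).mono hsub) : ContinuousWithinAt (KOm Ω) (U \ Sing U x) p)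
    filter_upwards [self_mem_nhdsWithin] with q hq
    exact (part1 q hq).1
  · refine Tendsto.congr' ?_ (((hHc p hpU).mono hsub) : ContinuousWithinAt (HOm x Ω) (U \ Sing U x) p)
    filter_upwards [self_mem_nhdsWithin] with q hq
    exact (part1 q hq).2
end
end
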